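/- arXiv:2410.14658 — 6 statements merged into one kernel-verified Lean document; each statement's English description precedes it below -/
import Mathlib

section
/- For every integer k ≥ 3, there exists a constant C > 0 such that, in the local certification model with verification radius 1, there is a local certification scheme for K_k-freeness whose certificates have size at most C·n bits on n-vertex graphs. -/
open scoped Classical

/-- A graph property: for each number of vertices `n`, a predicate on graphs on `Fin n`. -/
abbrev GraphProperty : Type := ∀ n : ℕ, SimpleGraph (Fin n) → Prop

/-- The local view of a vertex `u` in the local certification model with verification
radius 1: the identifier of `u`, the certificate of `u`, and the set of pairs
(identifier, certificate) over the neighbors of `u`. -/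
noncomputable def localView {n : ℕ} (G : SimpleGraph (Fin n)) (ident : Fin n → ℕ)
    (cert : Fin n → List Bool) (u : Fin n) :
    ℕ × List Bool × Finset (ℕ × List Bool) :=
  (ident u, cert u,
    (Finset.univ.filter (fun v => G.Adj u v)).image (fun v => (ident v, cert v)))

/-- `IsCertificationScheme c verifier s P` means: `verifier` is a local verification
procedure (with verification radius 1) which is a local certification scheme for the
property `P` with certificates of size `s`, in the model where identifiers of `n`-vertex
graphs are distinct elements of `{1, …, n^c}`.  For every connected graph `G` on `Fin n`
and every identifier assignment: if `P` holds, some certificate assignment (binary strings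
of length `s n`) makes every vertex accept (completeness), and if `P` fails, every
certificate assignment makes at least one vertex reject (soundness). -/
def IsCertificationScheme (c : ℕ)
    (verifier : ℕ × List Bool × Finset (ℕ × List Bool) → Bool)
    (s : ℕ → ℕ) (P : GraphProperty) : Prop :=
  ∀ (n : ℕ) (G : SimpleGraph (Fin n)), G.Connected →
    ∀ ident : Fin n → ℕ, Function.Injective ident →
      (∀ v, 1 ≤ ident v ∧ ident v ≤ n ^ c) →
      (P n G ↔ ∃ cert : Fin n → List Bool,
        (∀ v, (cert v).length = s n) ∧
        ∀ u : Fin n, verifier (localView G ident cert u) = true)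

/-- A graph is `P_k`-free if it contains no induced subgraph isomorphic to the path on
`k` vertices (graph embeddings are exactly induced-subgraph inclusions). -/
def PathFree (k : ℕ) {V : Type*} (G : SimpleGraph V) : Prop :=
  IsEmpty (SimpleGraph.pathGraph k ↪g G)

/-!
Each vertex is certified by the one-hot encoding of its index in `Fin n` followed by its row
of the adjacency matrix: `2 * n` bits. A vertex checks that its own index is set in the row of
every neighbour and that no `k - 1` of its neighbours form a clique according to their rows.
When every vertex accepts, adjacent vertices vouch for each other's rows, so a `k`-clique
through `u` would leave `k - 1` neighbours of `u` forming such a clique. Conversely, with the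
honest certificates a `(k - 1)`-clique among the neighbours of `u` extends by `u` to a
`k`-clique.
-/

namespace CliqueFreeCertification

open SimpleGraph

def index (l : List Bool) : ℕ := (l.take (l.length / 2)).findIdx id

def rowBit (l : List Bool) (j : ℕ) : Bool := (l.drop (l.length / 2)).getD j false

lemma index_append {a b : List Bool} (h : a.length = b.length) :
    index (a ++ b) = a.findIdx id := by
  rw [index, List.take_left' (by rw [List.length_append]; omega)]

lemma rowBit_append {a b : List Bool} (h : a.length = b.length) (j : ℕ) :
    rowBit (a ++ b) j = b.getD j false := by
  rw [rowBit, List.drop_left' (by rw [List.length_append]; omega)]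

def claimedGraph : SimpleGraph (ℕ × List Bool) :=
  fromRel fun p q => rowBit p.2 (index q.2) = true

def Accepts (k : ℕ) (x : ℕ × List Bool × Finset (ℕ × List Bool)) : Prop :=
  (∀ p ∈ x.2.2, rowBit p.2 (index x.2.1) = true) ∧
    ∀ S ⊆ x.2.2, ¬ claimedGraph.IsNClique (k - 1) S

noncomputable def honestCert {n : ℕ} (G : SimpleGraph (Fin n)) (v : Fin n) : List Bool :=
  List.ofFn (fun j : Fin n => decide (j = v)) ++ List.ofFn (fun j => decide (G.Adj v j))

lemma honestCert_length {n : ℕ} (G : SimpleGraph (Fin n)) (v : Fin n) :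
    (honestCert G v).length = 2 * n := by
  simp [honestCert, two_mul]

lemma index_honestCert {n : ℕ} (G : SimpleGraph (Fin n)) (v : Fin n) :
    index (honestCert G v) = v := by
  rw [honestCert, index_append (by simp), List.findIdx_eq (by simp)]
  simp only [Fin.ext_iff, List.getElem_ofFn, decide_true, id_eq, decide_eq_false_iff_not,
    true_and]
  omega

lemma rowBit_honestCert {n : ℕ} (G : SimpleGraph (Fin n)) (v w : Fin n) :
    rowBit (honestCert G v) w = decide (G.Adj v w) := by
  rw [honestCert, rowBit_append (by simp), List.getD_eq_getElem _ _ (by simp)]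
  simp

lemma honestCert_injective {n : ℕ} (G : SimpleGraph (Fin n)) :
    Function.Injective (honestCert G) :=
  fun a b h => Fin.ext (by simpa [index_honestCert] using congrArg index h)

lemma comap_honestCert_claimedGraph {n : ℕ} (G : SimpleGraph (Fin n)) (ident : Fin n → ℕ) :
    claimedGraph.comap (fun v => (ident v, honestCert G v)) = G := by
  ext a b
  simp only [comap_adj, claimedGraph, fromRel_adj, index_honestCert, rowBit_honestCert,
    decide_eq_true_eq]
  refine ⟨fun ⟨_, h⟩ => h.elim id G.adj_symm, fun h => ⟨fun he => G.ne_of_adj h ?_, Or.inl h⟩⟩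
  exact honestCert_injective G (congrArg Prod.snd he)

lemma isNClique_comap_of_map {α β : Type*} {H : SimpleGraph β} {f : α ↪ β} {n : ℕ}
    {s : Finset α} (h : H.IsNClique n (s.map f)) : (H.comap f).IsNClique n s :=
  ⟨fun a ha b hb hab => h.1 (by simpa using ha) (by simpa using hb) (f.injective.ne hab),
    by simpa using h.2⟩

lemma localView_neighbors {n : ℕ} (G : SimpleGraph (Fin n)) (ident : Fin n → ℕ)
    (cert : Fin n → List Bool) (u : Fin n) :
    (localView G ident cert u).2.2 = (G.neighborFinset u).image fun v => (ident v, cert v) := by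
  simp [localView, neighborFinset_eq_filter]

lemma mem_localView_iff {n : ℕ} {G : SimpleGraph (Fin n)} {ident : Fin n → ℕ}
    {cert : Fin n → List Bool} {u : Fin n} {p : ℕ × List Bool} :
    p ∈ (localView G ident cert u).2.2 ↔ ∃ v, G.Adj u v ∧ (ident v, cert v) = p := by
  simp [localView]

variable {n k : ℕ} {G : SimpleGraph (Fin n)} {ident : Fin n → ℕ}

lemma accepts_honestCert (hk : 0 < k) (hG : G.CliqueFree k) (u : Fin n) :
    Accepts k (localView G ident (honestCert G) u) := by
  let φ : Fin n ↪ ℕ × List Bool :=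
    ⟨fun v => (ident v, honestCert G v), fun a b h => honestCert_injective G (congrArg Prod.snd h)⟩
  refine ⟨fun p hp => ?_, fun S hS hS_clique => ?_⟩
  · obtain ⟨w, huw, rfl⟩ := mem_localView_iff.mp hp
    simpa [localView, index_honestCert, rowBit_honestCert] using huw.symm
  · rw [localView_neighbors] at hS
    obtain ⟨T, hTu, rfl⟩ := Finset.subset_image_iff.mp hS
    have hT : G.IsNClique (k - 1) T := by
      rw [← comap_honestCert_claimedGraph G ident]
      exact isNClique_comap_of_map (f := φ) (by rwa [Finset.map_eq_image])
    have hT_insert := hT.insert fun b hb => (G.mem_neighborFinset u b).mp (hTu hb)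
    rw [Nat.sub_add_cancel hk] at hT_insert
    exact hG _ hT_insert

lemma claimedGraph_adj_of_accepts (hident : Function.Injective ident) {cert : Fin n → List Bool}
    (hacc : ∀ u, Accepts k (localView G ident cert u)) {a b : Fin n} (hab : G.Adj a b) :
    claimedGraph.Adj (ident a, cert a) (ident b, cert b) :=
  (fromRel_adj _ _ _).mpr ⟨fun h => hab.ne (hident (congrArg Prod.fst h)),
    Or.inl ((hacc b).1 _ (mem_localView_iff.mpr ⟨a, hab.symm, rfl⟩))⟩

lemma cliqueFree_of_accepts (hk : 0 < k) (hident : Function.Injective ident)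
    {cert : Fin n → List Bool} (hacc : ∀ u, Accepts k (localView G ident cert u)) :
    G.CliqueFree k := by
  intro t ht
  obtain ⟨u, hu⟩ : t.Nonempty := Finset.card_pos.mp (ht.card_eq ▸ hk)
  let φ : Fin n ↪ ℕ × List Bool :=
    ⟨fun v => (ident v, cert v), fun a b h => hident (congrArg Prod.fst h)⟩
  have hle : G.map φ ≤ claimedGraph :=
    (map_le_iff_le_comap φ G _).mpr fun a b hab => claimedGraph_adj_of_accepts hident hacc hab
  refine (hacc u).2 ((t.erase u).map φ) (fun p hp => ?_) ((ht.erase_of_mem hu).map.mono hle)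
  obtain ⟨v, hv, rfl⟩ := Finset.mem_map.mp hp
  exact mem_localView_iff.mpr
    ⟨v, ht.1 hu (Finset.mem_of_mem_erase hv) (Finset.ne_of_mem_erase hv).symm, rfl⟩

theorem isCertificationScheme_cliqueFree (c : ℕ) (hk : 0 < k) :
    IsCertificationScheme c (fun x => decide (Accepts k x)) (fun n => 2 * n)
      (fun _ G => G.CliqueFree k) := by
  intro n G _ ident hident _
  simp only [decide_eq_true_eq]
  exact ⟨fun hG => ⟨honestCert G, honestCert_length G, accepts_honestCert hk hG⟩,
    fun ⟨_, _, hacc⟩ => cliqueFree_of_accepts hk hident hacc⟩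

end CliqueFreeCertification

/-- For every `k ≥ 3`, there is a constant `C > 0` such that, in the local certification
model with verification radius 1, there is a local certification scheme for
`K_k`-freeness with certificates of size at most `C * n` bits on `n`-vertex graphs. -/
theorem cliquefree_certification_upper_bound (k : ℕ) (hk : 3 ≤ k) :
    ∃ C : ℝ, 0 < C ∧
      ∀ c : ℕ, 1 ≤ c →
        ∃ (verifier : ℕ × List Bool × Finset (ℕ × List Bool) → Bool) (s : ℕ → ℕ),
          (∀ n : ℕ, (s n : ℝ) ≤ C * (n : ℝ)) ∧
          IsCertificationScheme c verifier s (fun _ G => G.CliqueFree k) :=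
  ⟨2, two_pos, fun c _ => ⟨_, _, fun n => by push_cast; rfl,
    CliqueFreeCertification.isCertificationScheme_cliqueFree c (by omega)⟩⟩
end

section
/- For every integer k ≥ 4, there exists a constant c > 0 such that every local certification scheme with verification radius 1 for K_k-freeness with certificates of size s(n) satisfies s(n) ≥ c·n for all sufficiently large n. -/
open scoped Classical

namespace CliqueLB

abbrev Vt (m K R : ℕ) : Type := Fin m ⊕ Fin m ⊕ Fin m ⊕ Fin m ⊕ Fin K ⊕ Fin R

variable {m K R : ℕ}

abbrev vA (i : Fin m) : Vt m K R := Sum.inl i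
abbrev vA' (j : Fin m) : Vt m K R := Sum.inr (Sum.inl j)
abbrev vB (q : Fin m) : Vt m K R := Sum.inr (Sum.inr (Sum.inl q))
abbrev vB' (t : Fin m) : Vt m K R := Sum.inr (Sum.inr (Sum.inr (Sum.inl t)))
abbrev vC (c : Fin K) : Vt m K R := Sum.inr (Sum.inr (Sum.inr (Sum.inr (Sum.inl c))))
abbrev vP (p : Fin R) : Vt m K R := Sum.inr (Sum.inr (Sum.inr (Sum.inr (Sum.inr p))))

def rel (A B : Finset (Fin m × Fin m)) : Vt m K R → Vt m K R → Prop
  | Sum.inl i, Sum.inr (Sum.inl j) => (i, j) ∈ A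
  | Sum.inl i, Sum.inr (Sum.inr (Sum.inl q)) => i = q
  | Sum.inl _, Sum.inr (Sum.inr (Sum.inr (Sum.inl _))) => True
  | Sum.inl i, Sum.inr (Sum.inr (Sum.inr (Sum.inr (Sum.inr _)))) => i.val = 0
  | Sum.inr (Sum.inl _), Sum.inr (Sum.inr (Sum.inl _)) => True
  | Sum.inr (Sum.inl j), Sum.inr (Sum.inr (Sum.inr (Sum.inl t))) => j = t
  | Sum.inr (Sum.inr (Sum.inl q)), Sum.inr (Sum.inr (Sum.inr (Sum.inl t))) => (q, t) ∈ B
  | Sum.inr (Sum.inr (Sum.inr (Sum.inr (Sum.inl c)))), Sum.inr (Sum.inr (Sum.inr (Sum.inr (Sum.inl c')))) => c ≠ c'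
  | Sum.inr (Sum.inr (Sum.inr (Sum.inr (Sum.inl _)))), _ => True
  | _, _ => False

@[simp] lemma rel_00 (A B : Finset (Fin m × Fin m)) (x1 : Fin m) (x2 : Fin m) :
    rel (K := K) (R := R) A B (vA x1) (vA x2) ↔ False := Iff.rfl

@[simp] lemma rel_01 (A B : Finset (Fin m × Fin m)) (x1 : Fin m) (x2 : Fin m) :
    rel (K := K) (R := R) A B (vA x1) (vA' x2) ↔ (x1, x2) ∈ A := Iff.rfl

@[simp] lemma rel_02 (A B : Finset (Fin m × Fin m)) (x1 : Fin m) (x2 : Fin m) :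
    rel (K := K) (R := R) A B (vA x1) (vB x2) ↔ x1 = x2 := Iff.rfl

@[simp] lemma rel_03 (A B : Finset (Fin m × Fin m)) (x1 : Fin m) (x2 : Fin m) :
    rel (K := K) (R := R) A B (vA x1) (vB' x2) ↔ True := Iff.rfl

@[simp] lemma rel_04 (A B : Finset (Fin m × Fin m)) (x1 : Fin m) (x2 : Fin K) :
    rel (K := K) (R := R) A B (vA x1) (vC x2) ↔ False := Iff.rfl

@[simp] lemma rel_05 (A B : Finset (Fin m × Fin m)) (x1 : Fin m) (x2 : Fin R) :
    rel (K := K) (R := R) A B (vA x1) (vP x2) ↔ x1.val = 0 := Iff.rfl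

@[simp] lemma rel_10 (A B : Finset (Fin m × Fin m)) (x1 : Fin m) (x2 : Fin m) :
    rel (K := K) (R := R) A B (vA' x1) (vA x2) ↔ False := Iff.rfl

@[simp] lemma rel_11 (A B : Finset (Fin m × Fin m)) (x1 : Fin m) (x2 : Fin m) :
    rel (K := K) (R := R) A B (vA' x1) (vA' x2) ↔ False := Iff.rfl

@[simp] lemma rel_12 (A B : Finset (Fin m × Fin m)) (x1 : Fin m) (x2 : Fin m) :
    rel (K := K) (R := R) A B (vA' x1) (vB x2) ↔ True := Iff.rfl

@[simp] lemma rel_13 (A B : Finset (Fin m × Fin m)) (x1 : Fin m) (x2 : Fin m) :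
    rel (K := K) (R := R) A B (vA' x1) (vB' x2) ↔ x1 = x2 := Iff.rfl

@[simp] lemma rel_14 (A B : Finset (Fin m × Fin m)) (x1 : Fin m) (x2 : Fin K) :
    rel (K := K) (R := R) A B (vA' x1) (vC x2) ↔ False := Iff.rfl

@[simp] lemma rel_15 (A B : Finset (Fin m × Fin m)) (x1 : Fin m) (x2 : Fin R) :
    rel (K := K) (R := R) A B (vA' x1) (vP x2) ↔ False := Iff.rfl

@[simp] lemma rel_20 (A B : Finset (Fin m × Fin m)) (x1 : Fin m) (x2 : Fin m) :
    rel (K := K) (R := R) A B (vB x1) (vA x2) ↔ False := Iff.rfl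

@[simp] lemma rel_21 (A B : Finset (Fin m × Fin m)) (x1 : Fin m) (x2 : Fin m) :
    rel (K := K) (R := R) A B (vB x1) (vA' x2) ↔ False := Iff.rfl

@[simp] lemma rel_22 (A B : Finset (Fin m × Fin m)) (x1 : Fin m) (x2 : Fin m) :
    rel (K := K) (R := R) A B (vB x1) (vB x2) ↔ False := Iff.rfl

@[simp] lemma rel_23 (A B : Finset (Fin m × Fin m)) (x1 : Fin m) (x2 : Fin m) :
    rel (K := K) (R := R) A B (vB x1) (vB' x2) ↔ (x1, x2) ∈ B := Iff.rfl

@[simp] lemma rel_24 (A B : Finset (Fin m × Fin m)) (x1 : Fin m) (x2 : Fin K) :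
    rel (K := K) (R := R) A B (vB x1) (vC x2) ↔ False := Iff.rfl

@[simp] lemma rel_25 (A B : Finset (Fin m × Fin m)) (x1 : Fin m) (x2 : Fin R) :
    rel (K := K) (R := R) A B (vB x1) (vP x2) ↔ False := Iff.rfl

@[simp] lemma rel_30 (A B : Finset (Fin m × Fin m)) (x1 : Fin m) (x2 : Fin m) :
    rel (K := K) (R := R) A B (vB' x1) (vA x2) ↔ False := Iff.rfl

@[simp] lemma rel_31 (A B : Finset (Fin m × Fin m)) (x1 : Fin m) (x2 : Fin m) :
    rel (K := K) (R := R) A B (vB' x1) (vA' x2) ↔ False := Iff.rfl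

@[simp] lemma rel_32 (A B : Finset (Fin m × Fin m)) (x1 : Fin m) (x2 : Fin m) :
    rel (K := K) (R := R) A B (vB' x1) (vB x2) ↔ False := Iff.rfl

@[simp] lemma rel_33 (A B : Finset (Fin m × Fin m)) (x1 : Fin m) (x2 : Fin m) :
    rel (K := K) (R := R) A B (vB' x1) (vB' x2) ↔ False := Iff.rfl

@[simp] lemma rel_34 (A B : Finset (Fin m × Fin m)) (x1 : Fin m) (x2 : Fin K) :
    rel (K := K) (R := R) A B (vB' x1) (vC x2) ↔ False := Iff.rfl

@[simp] lemma rel_35 (A B : Finset (Fin m × Fin m)) (x1 : Fin m) (x2 : Fin R) :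
    rel (K := K) (R := R) A B (vB' x1) (vP x2) ↔ False := Iff.rfl

@[simp] lemma rel_40 (A B : Finset (Fin m × Fin m)) (x1 : Fin K) (x2 : Fin m) :
    rel (K := K) (R := R) A B (vC x1) (vA x2) ↔ True := Iff.rfl

@[simp] lemma rel_41 (A B : Finset (Fin m × Fin m)) (x1 : Fin K) (x2 : Fin m) :
    rel (K := K) (R := R) A B (vC x1) (vA' x2) ↔ True := Iff.rfl

@[simp] lemma rel_42 (A B : Finset (Fin m × Fin m)) (x1 : Fin K) (x2 : Fin m) :
    rel (K := K) (R := R) A B (vC x1) (vB x2) ↔ True := Iff.rfl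

@[simp] lemma rel_43 (A B : Finset (Fin m × Fin m)) (x1 : Fin K) (x2 : Fin m) :
    rel (K := K) (R := R) A B (vC x1) (vB' x2) ↔ True := Iff.rfl

@[simp] lemma rel_44 (A B : Finset (Fin m × Fin m)) (x1 : Fin K) (x2 : Fin K) :
    rel (K := K) (R := R) A B (vC x1) (vC x2) ↔ x1 ≠ x2 := Iff.rfl

@[simp] lemma rel_45 (A B : Finset (Fin m × Fin m)) (x1 : Fin K) (x2 : Fin R) :
    rel (K := K) (R := R) A B (vC x1) (vP x2) ↔ True := Iff.rfl

@[simp] lemma rel_50 (A B : Finset (Fin m × Fin m)) (x1 : Fin R) (x2 : Fin m) :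
    rel (K := K) (R := R) A B (vP x1) (vA x2) ↔ False := Iff.rfl

@[simp] lemma rel_51 (A B : Finset (Fin m × Fin m)) (x1 : Fin R) (x2 : Fin m) :
    rel (K := K) (R := R) A B (vP x1) (vA' x2) ↔ False := Iff.rfl

@[simp] lemma rel_52 (A B : Finset (Fin m × Fin m)) (x1 : Fin R) (x2 : Fin m) :
    rel (K := K) (R := R) A B (vP x1) (vB x2) ↔ False := Iff.rfl

@[simp] lemma rel_53 (A B : Finset (Fin m × Fin m)) (x1 : Fin R) (x2 : Fin m) :
    rel (K := K) (R := R) A B (vP x1) (vB' x2) ↔ False := Iff.rfl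

@[simp] lemma rel_54 (A B : Finset (Fin m × Fin m)) (x1 : Fin R) (x2 : Fin K) :
    rel (K := K) (R := R) A B (vP x1) (vC x2) ↔ False := Iff.rfl

@[simp] lemma rel_55 (A B : Finset (Fin m × Fin m)) (x1 : Fin R) (x2 : Fin R) :
    rel (K := K) (R := R) A B (vP x1) (vP x2) ↔ False := Iff.rfl

@[simp] lemma rel_irrefl (A B : Finset (Fin m × Fin m)) (u : Vt m K R) : ¬ rel A B u u := by
  rcases u with i | j | q | t | c | p <;> simp

def Gr (A B : Finset (Fin m × Fin m)) : SimpleGraph (Vt m K R) where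
  Adj u v := rel A B u v ∨ rel A B v u
  symm := ⟨fun u v h => h.symm⟩
  loopless := by
    constructor
    intro u h
    rcases h with h | h <;> exact rel_irrefl A B u h

@[simp] lemma gr_adj (A B : Finset (Fin m × Fin m)) (u v : Vt m K R) :
    (Gr A B).Adj u v ↔ rel A B u v ∨ rel A B v u := Iff.rfl

/-- zone index -/
def zn : Vt m K R → ℕ
  | Sum.inl _ => 0
  | Sum.inr (Sum.inl _) => 1
  | Sum.inr (Sum.inr (Sum.inl _)) => 2
  | Sum.inr (Sum.inr (Sum.inr (Sum.inl _))) => 3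
  | Sum.inr (Sum.inr (Sum.inr (Sum.inr (Sum.inl _)))) => 4
  | Sum.inr (Sum.inr (Sum.inr (Sum.inr (Sum.inr _)))) => 5

lemma gr_cliqueFree (A B : Finset (Fin m × Fin m)) (hAB : ∀ p ∈ A, p ∉ B) :
    (Gr (K := K) (R := R) A B).CliqueFree (K + 4) := by
  intro S hS
  obtain ⟨hclique, hcard⟩ := hS
  -- the C part has at most K elements
  have hCsub : S.filter (fun v => zn v = 4) ⊆ Finset.univ.image (fun c : Fin K => vC (m := m) (R := R) c) := by
    intro v hv
    simp only [Finset.mem_filter] at hv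
    rcases v with i | j | q | t | c | p <;> simp [zn] at hv ⊢
  have hC : (S.filter (fun v => zn v = 4)).card ≤ K :=
    le_trans (Finset.card_le_card hCsub) (le_trans Finset.card_image_le (by simp))
  set T := S.filter (fun v => ¬ zn v = 4) with hTdef
  have hT4 : 4 ≤ T.card := by
    have h := Finset.card_filter_add_card_filter_not (s := S) (p := fun v => zn v = 4)
    rw [← hTdef] at h
    omega
  have hTsub : T ⊆ S := Finset.filter_subset _ _
  -- adjacency within the clique
  have hadj : ∀ x ∈ T, ∀ y ∈ T, x ≠ y → (Gr (K := K) (R := R) A B).Adj x y :=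
    fun x hx y hy hxy => hclique (hTsub hx) (hTsub hy) hxy
  -- no pads in T
  have hpadfree : ∀ v ∈ T, zn v ≠ 5 := by
    intro v hv hzv
    have hvcard : (T.erase v).card = T.card - 1 := Finset.card_erase_of_mem hv
    obtain ⟨x, hx, y, hy, hxy⟩ := Finset.one_lt_card.mp (by omega : 1 < (T.erase v).card)
    have hxT := Finset.mem_of_mem_erase hx
    have hyT := Finset.mem_of_mem_erase hy
    have hxp := Finset.ne_of_mem_erase hx
    have hyp := Finset.ne_of_mem_erase hy
    rcases v with i | j | q | t | c | p <;> simp [zn] at hzv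
    have hx0 : ∃ i : Fin m, x = vA i ∧ i.val = 0 := by
      have hax := hadj x hxT _ hv hxp
      have hznx : zn x ≠ 4 := by
        have := Finset.mem_filter.mp hxT; exact this.2
      rcases x with i | j | q | t | c | pp <;> simp [zn] at hax hznx ⊢
      · exact hax
    have hy0 : ∃ i : Fin m, y = vA i ∧ i.val = 0 := by
      have hay := hadj y hyT _ hv hyp
      have hzny : zn y ≠ 4 := by
        have := Finset.mem_filter.mp hyT; exact this.2
      rcases y with i | j | q | t | c | pp <;> simp [zn] at hay hzny ⊢
      · exact hay
    obtain ⟨i, rfl, hi⟩ := hx0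
    obtain ⟨i', rfl, hi'⟩ := hy0
    exact hxy (by simp [Fin.ext_iff, hi, hi'])
  -- zn is injective on T
  have hinj : Set.InjOn zn (T : Set (Vt m K R)) := by
    intro x hx y hy hz
    rw [Finset.mem_coe] at hx hy
    by_contra hne
    have h := hadj x hx y hy hne
    have hx4 : zn x ≠ 4 := (Finset.mem_filter.mp hx).2
    rcases x with i | j | q | t | c | p <;> rcases y with i' | j' | q' | t' | c' | p' <;>
      simp [zn] at h hz hx4 hne
  have himcard : (T.image zn).card = T.card := Finset.card_image_of_injOn hinj
  have himsub : T.image zn ⊆ {0, 1, 2, 3} := by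
    intro z hz
    obtain ⟨v, hv, rfl⟩ := Finset.mem_image.mp hz
    have h4 : zn v ≠ 4 := (Finset.mem_filter.mp hv).2
    have h5 : zn v ≠ 5 := hpadfree v hv
    rcases v with i | j | q | t | c | p <;> simp [zn] at h4 h5 ⊢
  have himeq : T.image zn = {0, 1, 2, 3} := by
    apply Finset.eq_of_subset_of_card_le himsub
    rw [himcard]
    have : ({0, 1, 2, 3} : Finset ℕ).card ≤ 4 := by decide
    omega
  -- extract one vertex per zone
  have hmem : ∀ z ∈ ({0, 1, 2, 3} : Finset ℕ), ∃ v ∈ T, zn v = z := by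
    intro z hz
    rw [← himeq] at hz
    obtain ⟨v, hv, h⟩ := Finset.mem_image.mp hz
    exact ⟨v, hv, h⟩
  obtain ⟨x0, hx0T, hx0⟩ := hmem 0 (by decide)
  obtain ⟨x1, hx1T, hx1⟩ := hmem 1 (by decide)
  obtain ⟨x2, hx2T, hx2⟩ := hmem 2 (by decide)
  obtain ⟨x3, hx3T, hx3⟩ := hmem 3 (by decide)
  obtain ⟨i, rfl⟩ : ∃ i : Fin m, x0 = vA i := by
    rcases x0 with i | j | q | t | c | p <;> simp [zn] at hx0 ⊢
  obtain ⟨j, rfl⟩ : ∃ j : Fin m, x1 = vA' j := by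
    rcases x1 with i | j | q | t | c | p <;> simp [zn] at hx1 ⊢
  obtain ⟨q, rfl⟩ : ∃ q : Fin m, x2 = vB q := by
    rcases x2 with i | j | q | t | c | p <;> simp [zn] at hx2 ⊢
  obtain ⟨t, rfl⟩ : ∃ t : Fin m, x3 = vB' t := by
    rcases x3 with i | j | q | t | c | p <;> simp [zn] at hx3 ⊢
  have hA : (i, j) ∈ A := by
    have := hadj _ hx0T _ hx1T (by simp)
    simpa using this
  have hiq : i = q := by
    have := hadj _ hx0T _ hx2T (by simp)
    simpa using this
  have hjt : j = t := by
    have := hadj _ hx1T _ hx3T (by simp)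
    simpa using this
  have hB : (q, t) ∈ B := by
    have := hadj _ hx2T _ hx3T (by simp)
    simpa using this
  exact hAB (i, j) hA (by rw [hiq, hjt]; exact hB)

lemma gr_not_cliqueFree (A B : Finset (Fin m × Fin m)) {i j : Fin m}
    (hA : (i, j) ∈ A) (hB : (i, j) ∈ B) :
    ¬ (Gr (K := K) (R := R) A B).CliqueFree (K + 4) := by
  intro h
  refine h ({vA i, vA' j, vB i, vB' j} ∪ Finset.univ.image vC) ⟨?_, ?_⟩
  · intro x hx y hy hxy
    simp only [Finset.coe_union, Finset.coe_insert, Finset.coe_singleton, Finset.coe_image,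
      Finset.coe_univ, Set.image_univ, Set.mem_union, Set.mem_insert_iff,
      Set.mem_singleton_iff, Set.mem_range] at hx hy
    rcases hx with (rfl | rfl | rfl | rfl) | ⟨cx, rfl⟩ <;>
      rcases hy with (rfl | rfl | rfl | rfl) | ⟨cy, rfl⟩ <;>
      simp_all
  · rw [Finset.card_union_of_disjoint (by simp [Finset.disjoint_left]), 
      Finset.card_image_of_injective _ (fun c c' hcc => by simpa using hcc)]
    have h4 : ({vA i, vA' j, vB i, vB' j} : Finset (Vt m K R)).card = 4 := by
      rw [Finset.card_insert_of_notMem (by simp), Finset.card_insert_of_notMem (by simp),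
        Finset.card_insert_of_notMem (by simp), Finset.card_singleton]
    simp [h4]
    omega

lemma gr_connected (hm : 0 < m) (A B : Finset (Fin m × Fin m)) :
    (Gr (K := K) (R := R) A B).Connected := by
  rw [SimpleGraph.connected_iff]
  refine ⟨?_, ⟨vA ⟨0, hm⟩⟩⟩
  have r1 : ∀ i : Fin m, (Gr (K := K) (R := R) A B).Reachable (vA i) (vA ⟨0, hm⟩) := by
    intro i
    exact ((by simp : (Gr (K := K) (R := R) A B).Adj (vA i) (vB' ⟨0, hm⟩)).reachable).trans
      ((by simp : (Gr (K := K) (R := R) A B).Adj (vA ⟨0, hm⟩) (vB' ⟨0, hm⟩)).reachable).symm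
  have key : ∀ v : Vt m K R, (Gr (K := K) (R := R) A B).Reachable v (vA ⟨0, hm⟩) := by
    intro v
    rcases v with i | j | q | t | c | p
    · exact r1 i
    · exact ((by simp : (Gr (K := K) (R := R) A B).Adj (vA' j) (vB ⟨0, hm⟩)).reachable).trans
        ((by simp : (Gr (K := K) (R := R) A B).Adj (vA ⟨0, hm⟩) (vB ⟨0, hm⟩)).reachable).symm
    · exact ((by simp : (Gr (K := K) (R := R) A B).Adj (vB q) (vA q)).reachable).trans (r1 q)
    · exact ((by simp : (Gr (K := K) (R := R) A B).Adj (vA ⟨0, hm⟩) (vB' t)).reachable).symm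
    · exact (by simp : (Gr (K := K) (R := R) A B).Adj (vC c) (vA ⟨0, hm⟩)).reachable
    · exact ((by simp : (Gr (K := K) (R := R) A B).Adj (vA ⟨0, hm⟩) (vP p)).reachable).symm
  intro u v
  exact (key u).trans (key v).symm

lemma gr_mix (A A' B B' : Finset (Fin m × Fin m)) (w : Vt m K R) :
    (∀ w', (Gr (K := K) (R := R) A B).Adj w w' ↔ (Gr (K := K) (R := R) A B').Adj w w') ∨
    (∀ w', (Gr (K := K) (R := R) A B).Adj w w' ↔ (Gr (K := K) (R := R) A' B).Adj w w') := by
  rcases w with i | j | q | t | c | p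
  · left; intro w'; rcases w' with i' | j' | q' | t' | c' | p' <;> simp
  · left; intro w'; rcases w' with i' | j' | q' | t' | c' | p' <;> simp
  · right; intro w'; rcases w' with i' | j' | q' | t' | c' | p' <;> simp
  · right; intro w'; rcases w' with i' | j' | q' | t' | c' | p' <;> simp
  · left; intro w'; rcases w' with i' | j' | q' | t' | c' | p' <;> simp
  · left; intro w'; rcases w' with i' | j' | q' | t' | c' | p' <;> simp

end CliqueLB

lemma localView_congr {n : ℕ} {G G' : SimpleGraph (Fin n)} (ident : Fin n → ℕ)
    (cert : Fin n → List Bool) (u : Fin n) (h : ∀ v, G.Adj u v ↔ G'.Adj u v) :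
    localView G ident cert u = localView G' ident cert u := by
  have hf : (Finset.univ.filter fun v => G.Adj u v) =
      (Finset.univ.filter fun v => G'.Adj u v) :=
    Finset.filter_congr (fun v _ => by rw [h v])
  rw [localView, localView, hf]

/-- For every `k ≥ 4`, there is a constant `ε > 0` such that every local certification
scheme with verification radius 1 for `K_k`-freeness with certificates of size `s n`
satisfies `s n ≥ ε * n` for all sufficiently large `n`. -/
theorem cliquefree_certification_lower_bound (k : ℕ) (hk : 4 ≤ k) :
    ∃ ε : ℝ, 0 < ε ∧
      ∀ c : ℕ, 1 ≤ c →
        ∀ (verifier : ℕ × List Bool × Finset (ℕ × List Bool) → Bool) (s : ℕ → ℕ),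
          IsCertificationScheme c verifier s (fun _ G => G.CliqueFree k) →
          ∃ N : ℕ, ∀ n : ℕ, N ≤ n → ε * (n : ℝ) ≤ (s n : ℝ) := by
  refine ⟨1/32, by norm_num, ?_⟩
  intro c hc verifier s hscheme
  refine ⟨8 * k + 64, ?_⟩
  intro n hn
  set K := k - 4 with hK
  set m := (n - K) / 4 with hmdef
  set R := (n - K) % 4 with hRdef
  have hkK : k = K + 4 := by omega
  have hm0 : 0 < m := by omega
  have hVcard : Fintype.card (CliqueLB.Vt m K R) = n := by
    simp only [CliqueLB.Vt, Fintype.card_sum, Fintype.card_fin]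
    omega
  set e := Fintype.equivFinOfCardEq hVcard with he
  set ident : Fin n → ℕ := fun v => v.val + 1 with hident
  have hinj : Function.Injective ident := by
    intro a b hab
    simpa [hident, Fin.ext_iff] using hab
  have hbnd : ∀ v : Fin n, 1 ≤ ident v ∧ ident v ≤ n ^ c := by
    intro v
    refine ⟨by simp [hident], ?_⟩
    have h1 : ident v ≤ n := by simp only [hident]; omega
    exact le_trans h1 (Nat.le_self_pow (by omega) n)
  set GF : Finset (Fin m × Fin m) → Finset (Fin m × Fin m) → SimpleGraph (Fin n) :=
    fun A B => (CliqueLB.Gr (K := K) (R := R) A B).comap e.symm.toEmbedding with hGF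
  have hGFadj : ∀ A B (x y : Fin n),
      (GF A B).Adj x y ↔ (CliqueLB.Gr (K := K) (R := R) A B).Adj (e.symm x) (e.symm y) := by
    intro A B x y
    simp [hGF]
  have hiso : ∀ A B, (GF A B) ≃g (CliqueLB.Gr (K := K) (R := R) A B) :=
    fun A B => SimpleGraph.Iso.comap e.symm (CliqueLB.Gr A B)
  have hconn : ∀ A B, (GF A B).Connected :=
    fun A B => ((hiso A B).connected_iff).mpr (CliqueLB.gr_connected hm0 A B)
  have hcf : ∀ A B, (∀ p ∈ A, p ∉ B) → (GF A B).CliqueFree k := by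
    intro A B hAB
    rw [hkK]
    exact (CliqueLB.gr_cliqueFree A B hAB).comap (hiso A B).toEmbedding.isContained
  have hncf : ∀ (A B : Finset (Fin m × Fin m)) (i j : Fin m),
      (i, j) ∈ A → (i, j) ∈ B → ¬ (GF A B).CliqueFree k := by
    intro A B i j hA hB hcf'
    rw [hkK] at hcf'
    exact CliqueLB.gr_not_cliqueFree A B hA hB
      (hcf'.comap (hiso A B).symm.toEmbedding.isContained)
  have hex : ∀ A : Finset (Fin m × Fin m), ∃ cert : Fin n → List Bool,
      (∀ v, (cert v).length = s n) ∧
      ∀ u : Fin n, verifier (localView (GF A Aᶜ) ident cert u) = true := by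
    intro A
    refine (hscheme n (GF A Aᶜ) (hconn A Aᶜ) ident hinj hbnd).mp ?_
    exact hcf A Aᶜ (fun p hp hp' => (Finset.mem_compl.mp hp') hp)
  choose cert hlen hacc using hex
  -- mixing: if two certificates coincide, the index sets coincide
  have main : ∀ A1 A2 : Finset (Fin m × Fin m), cert A1 = cert A2 →
      ∀ p ∈ A1, p ∈ A2 := by
    intro A1 A2 hcc p hp
    by_contra hp2
    have hp2' : p ∈ A2ᶜ := Finset.mem_compl.mpr hp2
    have hAcc : ∀ u : Fin n, verifier (localView (GF A1 A2ᶜ) ident (cert A1) u) = true := by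
      intro u
      rcases CliqueLB.gr_mix (K := K) (R := R) A1 A2 A2ᶜ A1ᶜ (e.symm u) with hmix | hmix
      · have hv : localView (GF A1 A2ᶜ) ident (cert A1) u
            = localView (GF A1 A1ᶜ) ident (cert A1) u := by
          refine localView_congr ident (cert A1) u (fun v => ?_)
          rw [hGFadj, hGFadj]
          exact hmix (e.symm v)
        rw [hv]
        exact hacc A1 u
      · have hv : localView (GF A1 A2ᶜ) ident (cert A1) u
            = localView (GF A2 A2ᶜ) ident (cert A1) u := by
          refine localView_congr ident (cert A1) u (fun v => ?_)
          rw [hGFadj, hGFadj]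
          exact hmix (e.symm v)
        rw [hv, hcc]
        exact hacc A2 u
    have hfree : (GF A1 A2ᶜ).CliqueFree k :=
      (hscheme n (GF A1 A2ᶜ) (hconn A1 A2ᶜ) ident hinj hbnd).mpr
        ⟨cert A1, hlen A1, hAcc⟩
    exact hncf A1 A2ᶜ p.1 p.2 (by simpa using hp) (by simpa using hp2') hfree
  have hcinj : Function.Injective cert := by
    intro A A' hAA
    exact Finset.Subset.antisymm (main A A' hAA) (main A' A hAA.symm)
  -- counting
  have hcount : Fintype.card (Finset (Fin m × Fin m))
      ≤ Fintype.card (Fin n → Fin (s n) → Bool) := by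
    apply Fintype.card_le_of_injective
      (fun A (v : Fin n) (i : Fin (s n)) =>
        (cert A v).get ⟨i.val, by rw [hlen A v]; exact i.isLt⟩)
    intro A A' hAA
    apply hcinj
    funext v
    apply List.ext_getElem (by rw [hlen A v, hlen A' v])
    intro idx h1 h2
    have h1' : idx < s n := by rw [hlen A v] at h1; exact h1
    have := congrFun (congrFun hAA v) ⟨idx, h1'⟩
    simpa using this
  have c1 : Fintype.card (Finset (Fin m × Fin m)) = 2 ^ (m * m) := by
    simp [Fintype.card_finset]
  have c2 : Fintype.card (Fin n → Fin (s n) → Bool) = 2 ^ (s n * n) := by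
    rw [Fintype.card_fun, Fintype.card_fun]
    simp [pow_mul]
  have hmn : m * m ≤ s n * n := by
    rw [c1, c2] at hcount
    exact (Nat.pow_le_pow_iff_right (by norm_num)).mp hcount
  -- arithmetic
  have h7 : 7 * n ≤ 32 * m := by omega
  have hq : 49 * (n * n) ≤ 1024 * (m * m) := by nlinarith [h7]
  have hfin : n ≤ 32 * s n := by nlinarith [hmn, hq]
  have hcast : (n : ℝ) ≤ 32 * (s n : ℝ) := by exact_mod_cast hfin
  linarith
end

section
/- Every finite connected P_5-free graph G has a dominating set D such that the subgraph of G induced by D is either a complete graph (a clique) or isomorphic to P_3 (an induced path on 3 vertices). -/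
namespace BTaux

open SimpleGraph

variable {V : Type*} {G : SimpleGraph V}

/-- Dominating set predicate (matching the theorem's formulation). -/
def Dom (G : SimpleGraph V) (S : Set V) : Prop :=
  ∀ v : V, v ∈ S ∨ ∃ u ∈ S, G.Adj u v

/-- Connected dominating finset. -/
def CDS (G : SimpleGraph V) (F : Finset V) : Prop :=
  Dom G ↑F ∧ (G.induce (↑F : Set V)).Connected

lemma myP5 (hfree : IsEmpty (SimpleGraph.pathGraph 5 ↪g G)) {v1 v2 v3 v4 v5 : V}
    (a12 : G.Adj v1 v2) (a23 : G.Adj v2 v3) (a34 : G.Adj v3 v4) (a45 : G.Adj v4 v5)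
    (n13 : ¬G.Adj v1 v3) (n14 : ¬G.Adj v1 v4) (n15 : ¬G.Adj v1 v5)
    (n24 : ¬G.Adj v2 v4) (n25 : ¬G.Adj v2 v5) (n35 : ¬G.Adj v3 v5) : False := by
  have d12 : v1 ≠ v2 := a12.ne
  have d23 : v2 ≠ v3 := a23.ne
  have d34 : v3 ≠ v4 := a34.ne
  have d45 : v4 ≠ v5 := a45.ne
  have d13 : v1 ≠ v3 := by rintro rfl; exact n14 a34
  have d14 : v1 ≠ v4 := by rintro rfl; exact n15 a45
  have d15 : v1 ≠ v5 := by rintro rfl; exact n14 a45.symm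
  have d24 : v2 ≠ v4 := by rintro rfl; exact n25 a45
  have d25 : v2 ≠ v5 := by rintro rfl; exact n15 a12
  have d35 : v3 ≠ v5 := by rintro rfl; exact n25 a23
  have a21 := a12.symm; have a32 := a23.symm; have a43 := a34.symm; have a54 := a45.symm
  have n31 : ¬G.Adj v3 v1 := fun h => n13 h.symm
  have n41 : ¬G.Adj v4 v1 := fun h => n14 h.symm
  have n51 : ¬G.Adj v5 v1 := fun h => n15 h.symm
  have n42 : ¬G.Adj v4 v2 := fun h => n24 h.symm
  have n52 : ¬G.Adj v5 v2 := fun h => n25 h.symm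
  have n53 : ¬G.Adj v5 v3 := fun h => n35 h.symm
  have nxx : ∀ x : V, ¬G.Adj x x := fun x => G.irrefl
  have d21 := d12.symm; have d32 := d23.symm; have d43 := d34.symm; have d54 := d45.symm
  have d31 := d13.symm; have d41 := d14.symm; have d51 := d15.symm
  have d42 := d24.symm; have d52 := d25.symm; have d53 := d35.symm
  let f : Fin 5 → V := ![v1, v2, v3, v4, v5]
  have hinj : Function.Injective f := by
    intro i j hij
    fin_cases i <;> fin_cases j <;> (try simp_all [f]) <;> decide
  have hrel : ∀ i j : Fin 5, G.Adj (f i) (f j) ↔ (SimpleGraph.pathGraph 5).Adj i j := by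
    intro i j
    fin_cases i <;> fin_cases j <;> (try simp_all [f, SimpleGraph.pathGraph_adj]) <;> decide
  exact hfree.false ⟨⟨f, hinj⟩, fun {i j} => hrel i j⟩

lemma reach_transfer {S T : Set V} :
    ∀ {a b : ↥S} (p : (G.induce S).Walk a b)
      (_hsub : ∀ x ∈ p.support, (x : V) ∈ T) (ha : (a : V) ∈ T) (hb : (b : V) ∈ T),
      (G.induce T).Reachable ⟨a, ha⟩ ⟨b, hb⟩
  | _, _, SimpleGraph.Walk.nil, _, _, _ => SimpleGraph.Reachable.refl _
  | a, b, SimpleGraph.Walk.cons (v := c) h q, hsub, ha, hb => by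
      have hc : (c : V) ∈ T := hsub c (by simp [SimpleGraph.Walk.support_cons])
      have hadj : (G.induce T).Adj ⟨a, ha⟩ ⟨c, hc⟩ := h
      exact hadj.reachable.trans
        (reach_transfer q (fun x hx => hsub x (by simp [SimpleGraph.Walk.support_cons, hx])) hc hb)

lemma conn_of_hub {S : Set V} {h0 : V} (hh : h0 ∈ S)
    (hstar : ∀ x ∈ S, x = h0 ∨ G.Adj x h0) : (G.induce S).Connected := by
  rw [SimpleGraph.connected_iff]
  constructor
  · intro x y
    have key : ∀ z : ↥S, (G.induce S).Reachable z ⟨h0, hh⟩ := by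
      rintro ⟨z, hz⟩
      rcases hstar z hz with h | h
      · subst h; exact SimpleGraph.Reachable.refl _
      · exact SimpleGraph.Adj.reachable (by exact h)
    exact (key x).trans (key y).symm
  · exact ⟨⟨h0, hh⟩⟩

lemma exists_adj_of_conn {S : Set V} (hS : (G.induce S).Connected) {a b : V}
    (ha : a ∈ S) (hb : b ∈ S) (hab : a ≠ b) : ∃ c ∈ S, G.Adj a c := by
  obtain ⟨w⟩ := hS.preconnected ⟨a, ha⟩ ⟨b, hb⟩
  cases w with
  | nil => exact absurd rfl hab
  | cons h q => exact ⟨_, (by exact Subtype.mem _), h⟩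

lemma private_of [DecidableEq V] {X : Finset V} (hmin : ∀ F : Finset V, CDS G F → X.card ≤ F.card)
    (hX : CDS G X) (hcard : 2 ≤ X.card) {s : V} (hs : s ∈ X)
    (hconn' : (G.induce (↑(X.erase s) : Set V)).Connected) :
    ∃ p, p ∉ X ∧ G.Adj p s ∧ ∀ x ∈ X, x ≠ s → ¬G.Adj p x := by
  have hnotdom : ¬Dom G ↑(X.erase s) := by
    intro hd
    have := hmin (X.erase s) ⟨hd, hconn'⟩
    rw [Finset.card_erase_of_mem hs] at this
    omega
  rw [Dom] at hnotdom
  push_neg at hnotdom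
  obtain ⟨w, hw1, hw2⟩ := hnotdom
  by_cases hwX : w ∈ X
  · have hws : w = s := by
      by_contra hne
      exact hw1 (Finset.mem_coe.mpr (Finset.mem_erase.mpr ⟨hne, hwX⟩))
    subst hws
    obtain ⟨b, hb, hbs⟩ := Finset.exists_mem_ne (s := X) (by omega) w
    obtain ⟨c, hc, hadj⟩ := exists_adj_of_conn hX.2 (Finset.mem_coe.mpr hwX) (Finset.mem_coe.mpr hb) (Ne.symm hbs)
    have hcX : c ∈ X := hc
    have hce : c ∈ X.erase w := Finset.mem_erase.mpr ⟨hadj.ne', hcX⟩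
    exact absurd hadj.symm (hw2 c (Finset.mem_coe.mpr hce))
  · rcases hX.1 w with h | ⟨u, hu, hadj⟩
    · exact absurd (by exact h) hwX
    · have huX : u ∈ X := hu
      have hus : u = s := by
        by_contra hne
        exact hw2 u (Finset.mem_coe.mpr (Finset.mem_erase.mpr ⟨hne, huX⟩)) hadj
      subst hus
      exact ⟨w, hwX, hadj.symm, fun x hx hxs h => hw2 x (Finset.mem_coe.mpr (Finset.mem_erase.mpr ⟨hxs, hx⟩)) h.symm⟩

lemma common_nbr [DecidableEq V] [Fintype V] (hfree : IsEmpty (SimpleGraph.pathGraph 5 ↪g G))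
    {X : Finset V} (hmin : ∀ F : Finset V, CDS G F → X.card ≤ F.card)
    (hX : CDS G X) {a b : V} (ha : a ∈ X) (hb : b ∈ X) (hab : a ≠ b)
    (hnadj : ¬G.Adj a b) : ∃ m ∈ X, G.Adj a m ∧ G.Adj m b := by
  classical
  have hcard2 : 2 ≤ X.card := Finset.one_lt_card.mpr ⟨a, ha, b, hb, hab⟩
  set S : Set V := ↑X with hS
  let H := G.induce S
  have hconnH : H.Connected := hX.2
  have haS : a ∈ S := Finset.mem_coe.mpr ha
  have hbS : b ∈ S := Finset.mem_coe.mpr hb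
  obtain ⟨sf, _, hmax⟩ := Finset.exists_max_image (Finset.univ : Finset ↥S)
      (fun t => H.dist ⟨a, haS⟩ t) ⟨⟨a, haS⟩, Finset.mem_univ _⟩
  have hmax' : ∀ t : ↥S, H.dist ⟨a, haS⟩ t ≤ H.dist ⟨a, haS⟩ sf :=
    fun t => hmax t (Finset.mem_univ t)
  have hecc : H.dist ⟨a, haS⟩ sf ≤ 2 := by
    by_contra hgt
    push_neg at hgt
    have hAsf : (⟨a, haS⟩ : ↥S) ≠ sf := by
      intro hEq
      rw [← hEq, SimpleGraph.dist_self] at hgt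
      omega
    have hsfX : (sf : V) ∈ X := sf.2
    have haE : a ∈ (↑(X.erase (sf : V)) : Set V) := by
      simp only [Finset.coe_erase, Set.mem_diff, Set.mem_singleton_iff]
      exact ⟨ha, fun hEq => hAsf (Subtype.ext hEq)⟩
    -- every vertex of X.erase sf is reachable to a within the erased graph
    have key : ∀ (z : ↥S) (hzsf : z ≠ sf),
        (G.induce (↑(X.erase (sf : V)) : Set V)).Reachable
          ⟨a, haE⟩ ⟨(z : V), by
            simp only [Finset.coe_erase, Set.mem_diff, Set.mem_singleton_iff]
            exact ⟨z.2, fun hEq => hzsf (Subtype.ext hEq)⟩⟩ := by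
      intro z hzsf
      obtain ⟨p, hp⟩ := (hconnH.preconnected ⟨a, haS⟩ z).exists_walk_length_eq_dist
      have hsfnot : sf ∉ p.support := by
        intro hmem
        have h1 : H.dist ⟨a, haS⟩ sf ≤ (p.takeUntil sf hmem).length :=
          SimpleGraph.dist_le _
        have h2 : (p.takeUntil sf hmem).length + (p.dropUntil sf hmem).length = p.length := by
          have := congrArg SimpleGraph.Walk.length (p.take_spec hmem)
          rwa [SimpleGraph.Walk.length_append] at this
        have h3 : H.dist ⟨a, haS⟩ z ≤ H.dist ⟨a, haS⟩ sf := hmax' z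
        have h4 : (p.dropUntil sf hmem).length = 0 := by omega
        exact hzsf (SimpleGraph.Walk.eq_of_length_eq_zero h4).symm
      have hsub : ∀ x ∈ p.support, (x : V) ∈ (↑(X.erase (sf : V)) : Set V) := by
        intro x hx
        simp only [Finset.coe_erase, Set.mem_diff, Set.mem_singleton_iff]
        refine ⟨x.2, fun hEq => hsfnot ?_⟩
        rwa [show sf = x from (Subtype.ext hEq).symm]
      exact reach_transfer p hsub (by exact haE) (hsub _ p.end_mem_support)
    have hconnE : (G.induce (↑(X.erase (sf : V)) : Set V)).Connected := by
      rw [SimpleGraph.connected_iff]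
      constructor
      · rintro ⟨x, hx⟩ ⟨y, hy⟩
        have hx' : x ∈ X.erase (sf : V) := Finset.mem_coe.mp hx
        have hy' : y ∈ X.erase (sf : V) := Finset.mem_coe.mp hy
        have hxS : x ∈ S := Finset.mem_coe.mpr (Finset.mem_erase.mp hx').2
        have hyS : y ∈ S := Finset.mem_coe.mpr (Finset.mem_erase.mp hy').2
        have hxne : (⟨x, hxS⟩ : ↥S) ≠ sf :=
          fun hEq => (Finset.mem_erase.mp hx').1 (by rw [← hEq])
        have hyne : (⟨y, hyS⟩ : ↥S) ≠ sf :=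
          fun hEq => (Finset.mem_erase.mp hy').1 (by rw [← hEq])
        exact (key ⟨x, hxS⟩ hxne).symm.trans (key ⟨y, hyS⟩ hyne)
      · exact ⟨⟨a, haE⟩⟩
    obtain ⟨ps, hpsX, hpsadj, hpsnon⟩ := private_of hmin hX hcard2 hsfX hconnE
    obtain ⟨q, hq⟩ := (hconnH.preconnected sf ⟨a, haS⟩).exists_walk_length_eq_dist
    have hqd : H.dist sf ⟨a, haS⟩ = H.dist ⟨a, haS⟩ sf := SimpleGraph.dist_comm
    have hqlen : 3 ≤ q.length := by omega
    cases q with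
    | nil => simp at hqlen
    | cons h1 q1 =>
      cases q1 with
      | nil => simp at hqlen
      | cons h2 q2 =>
        cases q2 with
        | nil => simp at hqlen
        | cons h3 r =>
          rename_i x1 x2 x3
          simp only [SimpleGraph.Walk.length_cons] at hq
          -- shortcut contradictions
          have nsx2 : ¬H.Adj sf x2 := by
            intro had
            have := SimpleGraph.dist_le (SimpleGraph.Walk.cons had (SimpleGraph.Walk.cons h3 r))
            simp only [SimpleGraph.Walk.length_cons] at this
            omega
          have nsx3 : ¬H.Adj sf x3 := by
            intro had
            have := SimpleGraph.dist_le (SimpleGraph.Walk.cons had r)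
            simp only [SimpleGraph.Walk.length_cons] at this
            omega
          have nx1x3 : ¬H.Adj x1 x3 := by
            intro had
            have := SimpleGraph.dist_le (SimpleGraph.Walk.cons h1 (SimpleGraph.Walk.cons had r))
            simp only [SimpleGraph.Walk.length_cons] at this
            omega
          have hx1sf : x1 ≠ sf := h1.ne'
          have hx2sf : x2 ≠ sf := by
            intro hEq
            subst hEq
            have := SimpleGraph.dist_le (SimpleGraph.Walk.cons h3 r)
            simp only [SimpleGraph.Walk.length_cons] at this
            omega
          have hx3sf : x3 ≠ sf := by
            intro hEq
            subst hEq
            have := SimpleGraph.dist_le r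
            omega
          exact myP5 hfree (v1 := ps) (v2 := (sf : V)) (v3 := (x1 : V)) (v4 := (x2 : V))
            (v5 := (x3 : V)) hpsadj (by exact h1) (by exact h2) (by exact h3)
            (hpsnon _ x1.2 (Subtype.coe_ne_coe.mpr hx1sf))
            (hpsnon _ x2.2 (Subtype.coe_ne_coe.mpr hx2sf))
            (hpsnon _ x3.2 (Subtype.coe_ne_coe.mpr hx3sf))
            (fun h => nsx2 (by exact h)) (fun h => nsx3 (by exact h))
            (fun h => nx1x3 (by exact h))
  -- now dist a b = 2
  have hdb : H.dist ⟨a, haS⟩ ⟨b, hbS⟩ ≤ 2 := le_trans (hmax' _) hecc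
  have hne : (⟨a, haS⟩ : ↥S) ≠ ⟨b, hbS⟩ := fun hEq => hab (congrArg Subtype.val hEq)
  have hd0 : H.dist ⟨a, haS⟩ ⟨b, hbS⟩ ≠ 0 :=
    fun h => hne (hconnH.dist_eq_zero_iff.mp h)
  have hd1 : H.dist ⟨a, haS⟩ ⟨b, hbS⟩ ≠ 1 := by
    intro h
    exact hnadj (by exact (SimpleGraph.dist_eq_one_iff_adj (G := H)).mp h)
  obtain ⟨w, hw⟩ := (hconnH.preconnected ⟨a, haS⟩ ⟨b, hbS⟩).exists_walk_length_eq_dist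
  have hwl : w.length = 2 := by omega
  cases w with
  | nil => simp at hwl
  | cons h1 w1 =>
    cases w1 with
    | nil => simp at hwl
    | cons h2 w2 =>
      cases w2 with
      | cons h3 w3 =>
        simp only [SimpleGraph.Walk.length_cons] at hwl
        omega
      | nil =>
        rename_i m
        exact ⟨(m : V), m.2, by exact h1, by exact h2⟩

lemma conn_erase [DecidableEq V] [Fintype V] (hfree : IsEmpty (SimpleGraph.pathGraph 5 ↪g G))
    {X : Finset V} (hmin : ∀ F : Finset V, CDS G F → X.card ≤ F.card)
    (hX : CDS G X) (hcard : 4 ≤ X.card) {s : V} (hs : s ∈ X) :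
    (G.induce (↑(X.erase s) : Set V)).Connected := by
  by_contra hnc
  set T : Set V := ↑(X.erase s) with hT
  set K := G.induce T with hK
  obtain ⟨z0, hz0⟩ : ∃ z, z ∈ X.erase s := by
    have : 0 < (X.erase s).card := by rw [Finset.card_erase_of_mem hs]; omega
    exact Finset.card_pos.mp this
  rw [SimpleGraph.connected_iff] at hnc
  push_neg at hnc
  have hpre : ¬K.Preconnected := fun h => (hnc h).false ⟨z0, Finset.mem_coe.mpr hz0⟩
  unfold SimpleGraph.Preconnected at hpre
  push_neg at hpre
  obtain ⟨x, y, hxy⟩ := hpre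
  have lemR : ∀ (z w : ↥T), ¬K.Reachable z w →
      G.Adj ↑z s ∧ G.Adj s ↑w ∧ ¬G.Adj ↑z ↑w := by
    intro z w hr
    have hzy : z ≠ w := fun h => hr (h ▸ SimpleGraph.Reachable.refl _)
    have hnadj : ¬G.Adj ↑z ↑w := fun h => hr (SimpleGraph.Adj.reachable (by exact h))
    have hzX : (z : V) ∈ X := (Finset.mem_erase.mp (Finset.mem_coe.mp z.2)).2
    have hwX : (w : V) ∈ X := (Finset.mem_erase.mp (Finset.mem_coe.mp w.2)).2
    have hvne : (z : V) ≠ (w : V) := fun h => hzy (Subtype.ext h)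
    obtain ⟨m, hm, hzm, hmy⟩ := common_nbr hfree hmin hX hzX hwX hvne hnadj
    by_cases hms : m = s
    · subst hms; exact ⟨hzm, hmy, hnadj⟩
    · exfalso
      have hmT : m ∈ T := Finset.mem_coe.mpr (Finset.mem_erase.mpr ⟨hms, hm⟩)
      exact hr ((SimpleGraph.Adj.reachable (show K.Adj z ⟨m, hmT⟩ from hzm)).trans
        (SimpleGraph.Adj.reachable (show K.Adj ⟨m, hmT⟩ w from hmy)))
  have hA1 : ∀ c : ↥T, G.Adj ↑c s := by
    intro c
    by_cases hcx : K.Reachable c x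
    · have hcy : ¬K.Reachable c y := fun h => hxy (hcx.symm.trans h)
      exact (lemR c y hcy).1
    · exact (lemR c x hcx).1
  have hxX : (x : V) ∈ X := (Finset.mem_erase.mp (Finset.mem_coe.mp x.2)).2
  have hyX : (y : V) ∈ X := (Finset.mem_erase.mp (Finset.mem_coe.mp y.2)).2
  have hxs : (x : V) ≠ s := (Finset.mem_erase.mp (Finset.mem_coe.mp x.2)).1
  have hys : (y : V) ≠ s := (Finset.mem_erase.mp (Finset.mem_coe.mp y.2)).1
  have hxyne : (x : V) ≠ (y : V) :=
    fun h => hxy ((Subtype.ext h : x = y) ▸ SimpleGraph.Reachable.refl _)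
  have hsadj : ∀ t : V, t ∈ X → t ≠ s → G.Adj t s := by
    intro t htX hts
    exact hA1 ⟨t, Finset.mem_coe.mpr (Finset.mem_erase.mpr ⟨hts, htX⟩)⟩
  have hconn_er : ∀ v : V, v ∈ X → v ≠ s → (G.induce (↑(X.erase v) : Set V)).Connected := by
    intro v hvX hvs
    apply conn_of_hub (h0 := s)
      (Finset.mem_coe.mpr (Finset.mem_erase.mpr ⟨Ne.symm hvs, hs⟩))
    intro t ht
    have ht' := Finset.mem_erase.mp (Finset.mem_coe.mp ht)
    by_cases hts : t = s
    · exact Or.inl hts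
    · exact Or.inr (hsadj t ht'.2 hts)
  obtain ⟨px, hpxX, hpxadj, hpxnon⟩ :=
    private_of hmin hX (by omega) hxX (hconn_er _ hxX hxs)
  obtain ⟨py, hpyX, hpyadj, hpynon⟩ :=
    private_of hmin hX (by omega) hyX (hconn_er _ hyX hys)
  obtain ⟨haxs, hasy, hnxy⟩ := lemR x y hxy
  have hpxpy : G.Adj px py := by
    by_contra hnp
    exact myP5 hfree (v1 := px) (v2 := (x : V)) (v3 := s) (v4 := (y : V)) (v5 := py)
      hpxadj haxs hasy hpyadj.symm
      (hpxnon s hs (Ne.symm hxs)) (hpxnon _ hyX hxyne.symm) hnp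
      hnxy (fun h => hpynon _ hxX hxyne h.symm)
      (fun h => hpynon s hs (Ne.symm hys) h.symm)
  obtain ⟨c, hc⟩ : ∃ c, c ∈ ((X.erase s).erase ↑x).erase ↑y := by
    apply Finset.card_pos.mp
    rw [Finset.card_erase_of_mem, Finset.card_erase_of_mem, Finset.card_erase_of_mem hs]
    · omega
    · exact Finset.mem_erase.mpr ⟨hxs, hxX⟩
    · exact Finset.mem_erase.mpr ⟨hxyne.symm, Finset.mem_erase.mpr ⟨hys, hyX⟩⟩
  have hcy : c ≠ (y : V) := (Finset.mem_erase.mp hc).1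
  have hcx : c ≠ (x : V) := (Finset.mem_erase.mp (Finset.mem_erase.mp hc).2).1
  have hcs : c ≠ s := (Finset.mem_erase.mp (Finset.mem_erase.mp (Finset.mem_erase.mp hc).2).2).1
  have hcX : c ∈ X := (Finset.mem_erase.mp (Finset.mem_erase.mp (Finset.mem_erase.mp hc).2).2).2
  have hcT : c ∈ T := Finset.mem_coe.mpr (Finset.mem_erase.mpr ⟨hcs, hcX⟩)
  have hcsadj : G.Adj s c := (hA1 ⟨c, hcT⟩).symm
  by_cases hreach : K.Reachable ⟨c, hcT⟩ x
  · have hcyr : ¬K.Reachable ⟨c, hcT⟩ y := fun h => hxy (hreach.symm.trans h)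
    obtain ⟨_, _, hncy⟩ := lemR _ y hcyr
    exact myP5 hfree (v1 := px) (v2 := py) (v3 := (y : V)) (v4 := s) (v5 := c)
      hpxpy hpyadj hasy.symm hcsadj
      (hpxnon _ hyX hxyne.symm) (hpxnon s hs (Ne.symm hxs)) (hpxnon c hcX hcx)
      (hpynon s hs (Ne.symm hys)) (hpynon c hcX hcy)
      (fun h => hncy h.symm)
  · obtain ⟨_, _, hncx⟩ := lemR _ x hreach
    exact myP5 hfree (v1 := py) (v2 := px) (v3 := (x : V)) (v4 := s) (v5 := c)
      hpxpy.symm hpxadj haxs hcsadj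
      (hpynon _ hxX hxyne) (hpynon s hs (Ne.symm hys)) (hpynon c hcX hcy)
      (hpxnon s hs (Ne.symm hxs)) (hpxnon c hcX hcx)
      (fun h => hncx h.symm)

lemma priv_adj [DecidableEq V] [Fintype V] (hfree : IsEmpty (SimpleGraph.pathGraph 5 ↪g G))
    {X : Finset V} (hmin : ∀ F : Finset V, CDS G F → X.card ≤ F.card)
    (hX : CDS G X) {a b pa pb : V}
    (ha : a ∈ X) (hb : b ∈ X) (hab : a ≠ b) (hnadj : ¬G.Adj a b)
    (hpa : G.Adj pa a) (hpan : ∀ x ∈ X, x ≠ a → ¬G.Adj pa x)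
    (hpb : G.Adj pb b) (hpbn : ∀ x ∈ X, x ≠ b → ¬G.Adj pb x) : G.Adj pa pb := by
  by_contra hnp
  obtain ⟨m, hm, ham, hmb⟩ := common_nbr hfree hmin hX ha hb hab hnadj
  exact myP5 hfree (v1 := pa) (v2 := a) (v3 := m) (v4 := b) (v5 := pb)
    hpa ham hmb hpb.symm
    (hpan m hm ham.ne') (hpan b hb (Ne.symm hab)) hnp
    hnadj (fun h => hpbn a ha hab h.symm)
    (fun h => hpbn m hm hmb.ne h.symm)

lemma clique_of_big [DecidableEq V] [Fintype V] (hfree : IsEmpty (SimpleGraph.pathGraph 5 ↪g G))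
    {X : Finset V} (hmin : ∀ F : Finset V, CDS G F → X.card ≤ F.card)
    (hX : CDS G X) (hcard : 4 ≤ X.card) : G.IsClique ↑X := by
  rw [SimpleGraph.isClique_iff]
  intro a ha b hb hab
  by_contra hnadj
  have haX : a ∈ X := Finset.mem_coe.mp ha
  have hbX : b ∈ X := Finset.mem_coe.mp hb
  obtain ⟨m, hm, ham, hmb⟩ := common_nbr hfree hmin hX haX hbX hab hnadj
  obtain ⟨pa, hpaX, hpaa, hpan⟩ :=
    private_of hmin hX (by omega) haX (conn_erase hfree hmin hX hcard haX)
  obtain ⟨pb, hpbX, hpbb, hpbn⟩ :=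
    private_of hmin hX (by omega) hbX (conn_erase hfree hmin hX hcard hbX)
  have hpapb : G.Adj pa pb :=
    priv_adj hfree hmin hX haX hbX hab hnadj hpaa hpan hpbb hpbn
  have hma : m ≠ a := ham.ne'
  have hpanea : pa ≠ a := hpaa.ne
  have hpanem : pa ≠ m := fun h => hpaX (h ▸ hm)
  set T : Finset V := {a, m, pa} with hTdef
  have hTcard : T.card ≤ 3 := by
    have h1 := Finset.card_insert_le a ({m, pa} : Finset V)
    have h2 := Finset.card_insert_le m ({pa} : Finset V)
    have h3 : ({pa} : Finset V).card = 1 := Finset.card_singleton _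
    rw [hTdef]
    omega
  have hconnT : (G.induce (↑T : Set V)).Connected := by
    apply conn_of_hub (h0 := a) (by simp [hTdef])
    intro t ht
    have : t = a ∨ t = m ∨ t = pa := by simpa [hTdef] using ht
    rcases this with rfl | rfl | rfl
    · exact Or.inl rfl
    · exact Or.inr ham.symm
    · exact Or.inr hpaa
  have hndT : ¬Dom G ↑T := by
    intro hd
    have := hmin T ⟨hd, hconnT⟩
    omega
  rw [Dom] at hndT
  push_neg at hndT
  obtain ⟨u, huT, hun⟩ := hndT
  have hnua : ¬G.Adj a u := hun a (by simp [hTdef])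
  have hnum : ¬G.Adj m u := hun m (by simp [hTdef])
  have hnupa : ¬G.Adj pa u := hun pa (by simp [hTdef])
  have hub : u ≠ b := fun h => hnum (h ▸ hmb)
  have hnub : ¬G.Adj b u := by
    intro h
    exact myP5 hfree (v1 := u) (v2 := b) (v3 := m) (v4 := a) (v5 := pa)
      h.symm hmb.symm ham.symm hpaa.symm
      (fun h' => hnum h'.symm) (fun h' => hnua h'.symm) (fun h' => hnupa h'.symm)
      (fun h' => hnadj h'.symm) (fun h' => hpan b hbX (Ne.symm hab) h'.symm)
      (fun h' => hpan m hm hma h'.symm)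
  by_cases huX : u ∈ X
  · have hua : u ≠ a := fun h => huT (by simp [hTdef, h])
    have hum : u ≠ m := fun h => huT (by simp [hTdef, h])
    obtain ⟨pu, hpuX, hpuu, hpun⟩ :=
      private_of hmin hX (by omega) huX (conn_erase hfree hmin hX hcard huX)
    have hpbpu : G.Adj pb pu :=
      priv_adj hfree hmin hX hbX huX (Ne.symm hub) hnub hpbb hpbn hpuu hpun
    exact myP5 hfree (v1 := m) (v2 := b) (v3 := pb) (v4 := pu) (v5 := u)
      hmb hpbb.symm hpbpu hpuu
      (fun h => hpbn m hm hmb.ne h.symm) (fun h => hpun m hm (Ne.symm hum) h.symm) hnum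
      (fun h => hpun b hbX (Ne.symm hub) h.symm) hnub
      (hpbn u huX hub)
  · have hu' := hX.1 u
    rcases hu' with h | ⟨d, hd, hdu⟩
    · exact huX (Finset.mem_coe.mp h)
    have hdX : d ∈ X := Finset.mem_coe.mp hd
    have hda : d ≠ a := fun h => hnua (h ▸ hdu)
    have hdm : d ≠ m := fun h => hnum (h ▸ hdu)
    have hdb : d ≠ b := fun h => hnub (h ▸ hdu)
    by_cases hupb : G.Adj u pb
    · exact myP5 hfree (v1 := u) (v2 := pb) (v3 := pa) (v4 := a) (v5 := m)
        hupb hpapb.symm hpaa ham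
        (fun h => hnupa h.symm) (fun h => hnua h.symm) (fun h => hnum h.symm)
        (hpbn a haX hab) (hpbn m hm hmb.ne)
        (hpan m hm hma)
    · by_cases hdbadj : G.Adj d b
      · exact myP5 hfree (v1 := u) (v2 := d) (v3 := b) (v4 := pb) (v5 := pa)
          hdu.symm hdbadj hpbb.symm hpapb.symm
          (fun h => hnub h.symm) hupb (fun h => hnupa h.symm)
          (fun h => hpbn d hdX hdb h.symm) (fun h => hpan d hdX hda h.symm)
          (fun h => hpan b hbX (Ne.symm hab) h.symm)
      · by_cases hdmadj : G.Adj d m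
        · exact myP5 hfree (v1 := u) (v2 := d) (v3 := m) (v4 := b) (v5 := pb)
            hdu.symm hdmadj hmb hpbb.symm
            (fun h => hnum h.symm) (fun h => hnub h.symm) hupb
            hdbadj (fun h => hpbn d hdX hdb h.symm)
            (fun h => hpbn m hm hmb.ne h.symm)
        · by_cases hdaadj : G.Adj d a
          · exact myP5 hfree (v1 := u) (v2 := d) (v3 := a) (v4 := m) (v5 := b)
              hdu.symm hdaadj ham hmb
              (fun h => hnua h.symm) (fun h => hnum h.symm) (fun h => hnub h.symm)
              hdmadj hdbadj hnadj
          · obtain ⟨pd, hpdX, hpdd, hpdn⟩ :=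
              private_of hmin hX (by omega) hdX (conn_erase hfree hmin hX hcard hdX)
            have hpdpa : G.Adj pd pa :=
              priv_adj hfree hmin hX hdX haX hda hdaadj hpdd hpdn hpaa hpan
            by_cases hupd : G.Adj u pd
            · exact myP5 hfree (v1 := u) (v2 := pd) (v3 := pa) (v4 := a) (v5 := m)
                hupd hpdpa hpaa ham
                (fun h => hnupa h.symm) (fun h => hnua h.symm) (fun h => hnum h.symm)
                (hpdn a haX (Ne.symm hda)) (hpdn m hm (Ne.symm hdm))
                (hpan m hm hma)
            · exact myP5 hfree (v1 := u) (v2 := d) (v3 := pd) (v4 := pa) (v5 := a)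
                hdu.symm hpdd.symm hpdpa hpaa
                hupd (fun h => hnupa h.symm) (fun h => hnua h.symm)
                (fun h => hpan d hdX hda h.symm) hdaadj
                (hpdn a haX (Ne.symm hda))

end BTaux

/-- Every finite connected `P₅`-free graph has a dominating set `D` whose induced
subgraph is either a complete graph (a clique) or isomorphic to `P₃`. -/
theorem p5_free_dominating_clique_or_p3 {V : Type*} [Fintype V] (G : SimpleGraph V)
    (hconn : G.Connected) (hfree : IsEmpty (SimpleGraph.pathGraph 5 ↪g G)) :
    ∃ D : Set V,
      (∀ v : V, v ∈ D ∨ ∃ u ∈ D, G.Adj u v) ∧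
      (G.IsClique D ∨ Nonempty (G.induce D ≃g SimpleGraph.pathGraph 3)) := by
  classical
  have hP : ∃ n, ∃ F : Finset V, F.card = n ∧ BTaux.CDS G F := by
    refine ⟨(Finset.univ : Finset V).card, Finset.univ, rfl, fun v => Or.inl (by simp), ?_⟩
    rw [Finset.coe_univ]
    exact (SimpleGraph.induceUnivIso G).connected_iff.mpr hconn
  obtain ⟨X, hXcard, hXcds⟩ := Nat.find_spec hP
  have hmin : ∀ F : Finset V, BTaux.CDS G F → X.card ≤ F.card := by
    intro F hF
    rw [hXcard]
    exact Nat.find_min' hP ⟨F, rfl, hF⟩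
  refine ⟨↑X, hXcds.1, ?_⟩
  by_cases hcl : G.IsClique (↑X : Set V)
  · exact Or.inl hcl
  right
  rw [SimpleGraph.isClique_iff, Set.Pairwise] at hcl
  push_neg at hcl
  obtain ⟨a, ha, b, hb, hab, hnadj⟩ := hcl
  have haX : a ∈ X := Finset.mem_coe.mp ha
  have hbX : b ∈ X := Finset.mem_coe.mp hb
  obtain ⟨m, hm, ham, hmb⟩ := BTaux.common_nbr hfree hmin hXcds haX hbX hab hnadj
  have hma : m ≠ a := ham.ne'
  have hmbne : m ≠ b := hmb.ne
  have ham' : a ≠ m := ham.ne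
  have hba : b ≠ a := Ne.symm hab
  have hbm : b ≠ m := Ne.symm hmbne
  have hcardlt : X.card < 4 := by
    by_contra h
    push_neg at h
    exact hnadj (BTaux.clique_of_big hfree hmin hXcds h ha hb hab)
  have hsub : ({a, m, b} : Finset V) ⊆ X := by
    intro t ht
    rcases Finset.mem_insert.mp ht with rfl | ht'
    · exact haX
    rcases Finset.mem_insert.mp ht' with rfl | ht''
    · exact hm
    · rw [Finset.mem_singleton.mp ht'']; exact hbX
  have hc3 : ({a, m, b} : Finset V).card = 3 := by
    rw [Finset.card_insert_of_notMem (by simp [ham', hab]),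
      Finset.card_insert_of_notMem (by simp [hmbne]), Finset.card_singleton]
  have hXeq : X = {a, m, b} := (Finset.eq_of_subset_of_card_le hsub (by omega)).symm
  rw [hXeq]
  have hDa : a ∈ (↑({a, m, b} : Finset V) : Set V) := by simp
  have hDm : m ∈ (↑({a, m, b} : Finset V) : Set V) := by simp
  have hDb : b ∈ (↑({a, m, b} : Finset V) : Set V) := by simp
  have hirr : ∀ z : V, ¬G.Adj z z := fun z => G.loopless.irrefl z
  have hnadj' : ¬G.Adj b a := fun h => hnadj h.symm
  refine ⟨⟨⟨fun x => if (x : V) = a then 0 else if (x : V) = m then 1 else 2,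
    fun i => if i = 0 then ⟨a, hDa⟩ else if i = 1 then ⟨m, hDm⟩ else ⟨b, hDb⟩,
    ?_, ?_⟩, ?_⟩⟩
  · rintro ⟨x, hx⟩
    have hx' : x = a ∨ x = m ∨ x = b := by simpa using hx
    rcases hx' with rfl | rfl | rfl
    · simp
    · simp [hma]
    · simp [hba, hbm]
  · intro i
    fin_cases i
    · simp
    · simp [hma]
    · simp [hba, hbm]
  · rintro ⟨x, hx⟩ ⟨y, hy⟩
    have hx' : x = a ∨ x = m ∨ x = b := by simpa using hx
    have hy' : y = a ∨ y = m ∨ y = b := by simpa using hy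
    rcases hx' with rfl | rfl | rfl <;> rcases hy' with rfl | rfl | rfl <;>
      (try simp [SimpleGraph.pathGraph_adj, hma, hba, hbm, ham, hmb, hnadj, hnadj', hirr,
        ham.symm, hmb.symm]) <;>
      first
        | exact ham | exact ham.symm | exact hmb | exact hmb.symm
        | exact fun h => hnadj h | exact fun h => hnadj' h
end

section
/- For every integer k ≥ 4, every finite connected P_k-free graph G has a connected dominating set D (that is, D is a dominating set of G and the subgraph of G induced by D is connected) such that the subgraph of G induced by D is either P_{k−2}-free or isomorphic to P_{k−2}. -/
namespace PkAux

variable {V : Type*} (G : SimpleGraph V)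

/-- `u 0, ..., u (n-1)` is an induced path in `G` (function form). -/
def IPG (n : ℕ) (u : ℕ → V) : Prop :=
  (∀ i j, i < n → j < n → (G.Adj (u i) (u j) ↔ (j = i + 1 ∨ i = j + 1))) ∧
  (∀ i j, i < n → j < n → u i = u j → i = j)

variable {G}

lemma IPG.rev {n : ℕ} {u : ℕ → V} (h : IPG G n u) :
    IPG G n (fun j => u (n - 1 - j)) := by
  obtain ⟨ha, hi⟩ := h
  constructor
  · intro i j hi' hj'
    rw [ha _ _ (by omega) (by omega)]
    omega
  · intro i j hi' hj' he
    have := hi _ _ (by omega) (by omega) he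
    omega

/-- prepend a vertex to an induced path -/
lemma IPG.cons {n : ℕ} {u : ℕ → V} (h : IPG G n u) {z : V}
    (hadj : G.Adj z (u 0)) (hnadj : ∀ j, 1 ≤ j → j < n → ¬ G.Adj z (u j))
    (hne : ∀ j, j < n → z ≠ u j) :
    IPG G (n + 1) (fun j => if j = 0 then z else u (j - 1)) := by
  obtain ⟨ha, hi⟩ := h
  constructor
  · intro i j hi' hj'
    rcases Nat.eq_zero_or_pos i with rfl | hip <;> rcases Nat.eq_zero_or_pos j with rfl | hjp
    · simp [G.irrefl]
    · simp only [if_pos rfl, if_neg (by omega : ¬ j = 0)]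
      rcases Nat.eq_or_lt_of_le hjp with rfl | hj2
      · norm_num
        exact hadj
      · constructor
        · intro hadj'; exact absurd hadj' (hnadj _ (by omega) (by omega))
        · omega
    · simp only [if_neg (by omega : ¬ i = 0), if_pos rfl]
      rcases Nat.eq_or_lt_of_le hip with rfl | hi2
      · constructor
        · intro _; omega
        · intro _; exact hadj.symm
      · constructor
        · intro hadj'; exact absurd hadj'.symm (hnadj _ (by omega) (by omega))
        · omega
    · simp only [if_neg (by omega : ¬ i = 0), if_neg (by omega : ¬ j = 0)]
      rw [ha _ _ (by omega) (by omega)]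
      omega
  · intro i j hi' hj' he
    rcases Nat.eq_zero_or_pos i with rfl | hip <;> rcases Nat.eq_zero_or_pos j with rfl | hjp
    · rfl
    · simp only [if_pos rfl, if_neg (by omega : ¬ j = 0)] at he
      exact absurd he (hne _ (by omega))
    · simp only [if_neg (by omega : ¬ i = 0), if_pos rfl] at he
      exact absurd he.symm (hne _ (by omega))
    · simp only [if_neg (by omega : ¬ i = 0), if_neg (by omega : ¬ j = 0)] at he
      have := hi _ _ (by omega) (by omega) he
      omega


/-- build an IPG from facts about ordered pairs only -/
lemma IPG.ofLT {n : ℕ} {u : ℕ → V}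
    (hadj : ∀ i j, i < j → j < n → (G.Adj (u i) (u j) ↔ j = i + 1))
    (hne : ∀ i j, i < j → j < n → u i ≠ u j) : IPG G n u := by
  constructor
  · intro i j hi hj
    rcases lt_trichotomy i j with h | rfl | h
    · rw [hadj i j h hj]; omega
    · exact ⟨fun h => absurd h (G.loopless.irrefl _), fun h => by omega⟩
    · rw [G.adj_comm, hadj j i h hi]; omega
  · intro i j hi hj he
    rcases lt_trichotomy i j with h | rfl | h
    · exact absurd he (hne i j h hj)
    · rfl
    · exact absurd he.symm (hne j i h hi)

section Shapes

variable {m : ℕ} {u : ℕ → V} {x y : V}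

/-- Hypotheses common to the shape constructions. -/
structure XY (G : SimpleGraph V) (m : ℕ) (u : ℕ → V) (x y : V) : Prop where
  hm : 2 ≤ m
  hu : IPG G m u
  hxu : G.Adj x (u 0)
  hxo : ∀ j, j < m → j ≠ 0 → ¬ G.Adj x (u j)
  hyu : G.Adj y (u (m - 1))
  hyo : ∀ j, j < m → j ≠ m - 1 → ¬ G.Adj y (u j)
  hxny : ∀ j, j < m → x ≠ u j
  hyny : ∀ j, j < m → y ≠ u j
  hxy : x ≠ y

/-- Shape 2: `x, u 0, ..., u (m-1), y` : needs `¬ Adj x y`. -/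
lemma XY.shape2 (H : XY G m u x y) (hnxy : ¬ G.Adj x y) :
    IPG G (m + 2) (fun i => if i = 0 then x else if i ≤ m then u (i - 1) else y) := by
  obtain ⟨hm, ⟨hua, hui⟩, hxu, hxo, hyu, hyo, hxny, hyny, hxy⟩ := H
  apply IPG.ofLT
  · intro i j hij hj
    rcases Nat.eq_zero_or_pos i with rfl | hip
    · rcases Nat.lt_or_ge j (m + 1) with hjm | hjm
      · simp only [if_neg (by omega : ¬ j = 0), if_pos (by omega : j ≤ m)]
        constructor
        · intro ha
          by_contra hne
          exact hxo (j - 1) (by omega) (by omega) ha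
        · intro h; subst h; simpa using hxu
      · have hj1 : j = m + 1 := by omega
        subst hj1
        simp only [if_neg (by omega : ¬ m + 1 = 0), if_neg (by omega : ¬ m + 1 ≤ m)]
        constructor
        · intro ha; exact absurd ha hnxy
        · omega
    · rcases Nat.lt_or_ge j (m + 1) with hjm | hjm
      · simp only [if_neg (by omega : ¬ i = 0), if_neg (by omega : ¬ j = 0),
          if_pos (by omega : i ≤ m), if_pos (by omega : j ≤ m)]
        rw [hua _ _ (by omega) (by omega)]
        omega
      · have hj1 : j = m + 1 := by omega
        subst hj1
        simp only [if_neg (by omega : ¬ i = 0), if_pos (by omega : i ≤ m),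
          if_neg (by omega : ¬ m + 1 = 0), if_neg (by omega : ¬ m + 1 ≤ m)]
        rw [G.adj_comm]
        constructor
        · intro ha
          by_contra hne
          exact hyo (i - 1) (by omega) (by omega) ha
        · intro h
          have : i - 1 = m - 1 := by omega
          rw [this]; exact hyu
  · intro i j hij hj
    rcases Nat.eq_zero_or_pos i with rfl | hip
    · rcases Nat.lt_or_ge j (m + 1) with hjm | hjm
      · simp only [if_neg (by omega : ¬ j = 0), if_pos (by omega : j ≤ m)]
        exact hxny _ (by omega)
      · have hj1 : j = m + 1 := by omega
        subst hj1
        simpa using hxy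
    · rcases Nat.lt_or_ge j (m + 1) with hjm | hjm
      · simp only [if_neg (by omega : ¬ i = 0), if_neg (by omega : ¬ j = 0),
          if_pos (by omega : i ≤ m), if_pos (by omega : j ≤ m)]
        intro he
        have := hui _ _ (by omega) (by omega) he
        omega
      · have hj1 : j = m + 1 := by omega
        subst hj1
        simp only [if_neg (by omega : ¬ i = 0), if_pos (by omega : i ≤ m),
          if_neg (by omega : ¬ m + 1 = 0), if_neg (by omega : ¬ m + 1 ≤ m)]
        intro he
        exact hyny _ (by omega) he.symm

/-- Shape 3: `q, u t, ..., u 0, x, y, u (m-1), ..., u (t+2)` for `t ≤ m - 2`. -/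
lemma XY.shape3 (H : XY G m u x y) (hAxy : G.Adj x y) {q : V} {t : ℕ} (ht : t ≤ m - 2)
    (hqt : G.Adj q (u t)) (hqo : ∀ j, j < m → j ≠ t → j ≠ t + 1 → ¬ G.Adj q (u j))
    (hqx : ¬ G.Adj q x) (hqy : ¬ G.Adj q y) (hqu : ∀ j, j < m → q ≠ u j) :
    IPG G (m + 2) (fun i => if i = 0 then q else if i ≤ t + 1 then u (t + 1 - i)
      else if i = t + 2 then x else if i = t + 3 then y else u (m + t + 3 - i)) := by
  obtain ⟨hm, ⟨hua, hui⟩, hxu, hxo, hyu, hyo, hxny, hyny, hxy⟩ := H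
  have hqnx : q ≠ x := fun h => hqy (h ▸ hAxy)
  have hqny : q ≠ y := fun h => hqx (h ▸ hAxy.symm)
  apply IPG.ofLT
  · intro i j hij hj
    rcases Nat.eq_zero_or_pos i with rfl | hip
    · -- i = 0 (q)
      rcases Nat.lt_or_ge j (t + 2) with hj2 | hj2
      · simp only [if_neg (by omega : ¬ j = 0), if_pos (by omega : j ≤ t + 1)]
        constructor
        · intro ha
          by_contra hne
          exact hqo (t + 1 - j) (by omega) (by omega) (by omega) ha
        · intro h
          have : t + 1 - j = t := by omega
          rw [this]; exact hqt
      · rcases Nat.lt_or_ge j (t + 3) with hj3 | hj3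
        · have : j = t + 2 := by omega
          subst this
          simp only [if_neg (by omega : ¬ t + 2 = 0), if_neg (by omega : ¬ t + 2 ≤ t + 1),
            if_pos rfl]
          exact ⟨fun ha => absurd ha hqx, by omega⟩
        · rcases Nat.lt_or_ge j (t + 4) with hj4 | hj4
          · have : j = t + 3 := by omega
            subst this
            simp only [if_neg (by omega : ¬ t + 3 = 0), if_neg (by omega : ¬ t + 3 ≤ t + 1),
              if_neg (by omega : ¬ t + 3 = t + 2), if_pos rfl]
            exact ⟨fun ha => absurd ha hqy, by omega⟩
          · simp only [if_neg (by omega : ¬ j = 0), if_neg (by omega : ¬ j ≤ t + 1),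
              if_neg (by omega : ¬ j = t + 2), if_neg (by omega : ¬ j = t + 3)]
            constructor
            · intro ha
              exact absurd ha (hqo (m + t + 3 - j) (by omega) (by omega) (by omega))
            · omega
    · rcases Nat.lt_or_ge i (t + 2) with hi2 | hi2
      · -- i in R1 (u (t+1-i))
        rcases Nat.lt_or_ge j (t + 2) with hj2 | hj2
        · simp only [if_neg (by omega : ¬ i = 0), if_neg (by omega : ¬ j = 0),
            if_pos (by omega : i ≤ t + 1), if_pos (by omega : j ≤ t + 1)]
          rw [hua _ _ (by omega) (by omega)]
          omega
        · rcases Nat.lt_or_ge j (t + 3) with hj3 | hj3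
          · have : j = t + 2 := by omega
            subst this
            simp only [if_neg (by omega : ¬ i = 0), if_pos (by omega : i ≤ t + 1),
              if_neg (by omega : ¬ t + 2 = 0), if_neg (by omega : ¬ t + 2 ≤ t + 1), if_pos rfl]
            rw [G.adj_comm]
            constructor
            · intro ha
              by_contra hne
              exact hxo (t + 1 - i) (by omega) (by omega) ha
            · intro h
              have : t + 1 - i = 0 := by omega
              rw [this]; exact hxu
          · rcases Nat.lt_or_ge j (t + 4) with hj4 | hj4
            · have : j = t + 3 := by omega
              subst this
              simp only [if_neg (by omega : ¬ i = 0), if_pos (by omega : i ≤ t + 1),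
                if_neg (by omega : ¬ t + 3 = 0), if_neg (by omega : ¬ t + 3 ≤ t + 1),
                if_neg (by omega : ¬ t + 3 = t + 2), if_pos rfl]
              rw [G.adj_comm]
              constructor
              · intro ha
                exact absurd ha (hyo (t + 1 - i) (by omega) (by omega))
              · omega
            · simp only [if_neg (by omega : ¬ i = 0), if_pos (by omega : i ≤ t + 1),
                if_neg (by omega : ¬ j = 0), if_neg (by omega : ¬ j ≤ t + 1),
                if_neg (by omega : ¬ j = t + 2), if_neg (by omega : ¬ j = t + 3)]
              rw [hua _ _ (by omega) (by omega)]
              omega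
      · rcases Nat.lt_or_ge i (t + 3) with hi3 | hi3
        · -- i = t+2 (x)
          have : i = t + 2 := by omega
          subst this
          rcases Nat.lt_or_ge j (t + 4) with hj4 | hj4
          · have : j = t + 3 := by omega
            subst this
            simp only [if_neg (by omega : ¬ t + 2 = 0), if_neg (by omega : ¬ t + 2 ≤ t + 1),
              if_pos rfl, if_neg (by omega : ¬ t + 3 = 0), if_neg (by omega : ¬ t + 3 ≤ t + 1),
              if_neg (by omega : ¬ t + 3 = t + 2)]
            exact ⟨fun _ => by trivial, fun _ => hAxy⟩
          · simp only [if_neg (by omega : ¬ t + 2 = 0), if_neg (by omega : ¬ t + 2 ≤ t + 1),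
              if_pos rfl, if_neg (by omega : ¬ j = 0), if_neg (by omega : ¬ j ≤ t + 1),
              if_neg (by omega : ¬ j = t + 2), if_neg (by omega : ¬ j = t + 3)]
            constructor
            · intro ha
              exact absurd ha (hxo (m + t + 3 - j) (by omega) (by omega))
            · omega
        · rcases Nat.lt_or_ge i (t + 4) with hi4 | hi4
          · -- i = t+3 (y)
            have : i = t + 3 := by omega
            subst this
            simp only [if_neg (by omega : ¬ t + 3 = 0), if_neg (by omega : ¬ t + 3 ≤ t + 1),
              if_neg (by omega : ¬ t + 3 = t + 2), if_pos rfl, if_neg (by omega : ¬ j = 0),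
              if_neg (by omega : ¬ j ≤ t + 1), if_neg (by omega : ¬ j = t + 2),
              if_neg (by omega : ¬ j = t + 3)]
            constructor
            · intro ha
              by_contra hne
              exact hyo (m + t + 3 - j) (by omega) (by omega) ha
            · intro h
              have : m + t + 3 - j = m - 1 := by omega
              rw [this]; exact hyu
          · -- both in R4
            simp only [if_neg (by omega : ¬ i = 0), if_neg (by omega : ¬ i ≤ t + 1),
              if_neg (by omega : ¬ i = t + 2), if_neg (by omega : ¬ i = t + 3),
              if_neg (by omega : ¬ j = 0), if_neg (by omega : ¬ j ≤ t + 1),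
              if_neg (by omega : ¬ j = t + 2), if_neg (by omega : ¬ j = t + 3)]
            rw [hua _ _ (by omega) (by omega)]
            omega
  · intro i j hij hj
    rcases Nat.eq_zero_or_pos i with rfl | hip
    · rcases Nat.lt_or_ge j (t + 2) with hj2 | hj2
      · simp only [if_neg (by omega : ¬ j = 0), if_pos (by omega : j ≤ t + 1)]
        exact hqu _ (by omega)
      · rcases Nat.lt_or_ge j (t + 3) with hj3 | hj3
        · have : j = t + 2 := by omega
          subst this
          simpa using hqnx
        · rcases Nat.lt_or_ge j (t + 4) with hj4 | hj4
          · have : j = t + 3 := by omega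
            subst this
            simp only [if_neg (by omega : ¬ t + 3 = 0), if_neg (by omega : ¬ t + 3 ≤ t + 1),
              if_neg (by omega : ¬ t + 3 = t + 2), if_pos rfl]
            simpa using hqny
          · simp only [if_neg (by omega : ¬ j = 0), if_neg (by omega : ¬ j ≤ t + 1),
              if_neg (by omega : ¬ j = t + 2), if_neg (by omega : ¬ j = t + 3)]
            exact hqu _ (by omega)
    · rcases Nat.lt_or_ge i (t + 2) with hi2 | hi2
      · rcases Nat.lt_or_ge j (t + 2) with hj2 | hj2
        · simp only [if_neg (by omega : ¬ i = 0), if_neg (by omega : ¬ j = 0),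
            if_pos (by omega : i ≤ t + 1), if_pos (by omega : j ≤ t + 1)]
          intro he
          have := hui _ _ (by omega) (by omega) he
          omega
        · rcases Nat.lt_or_ge j (t + 3) with hj3 | hj3
          · have : j = t + 2 := by omega
            subst this
            simp only [if_neg (by omega : ¬ i = 0), if_pos (by omega : i ≤ t + 1),
              if_neg (by omega : ¬ t + 2 = 0), if_neg (by omega : ¬ t + 2 ≤ t + 1), if_pos rfl]
            intro he
            exact hxny _ (by omega) he.symm
          · rcases Nat.lt_or_ge j (t + 4) with hj4 | hj4
            · have : j = t + 3 := by omega
              subst this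
              simp only [if_neg (by omega : ¬ i = 0), if_pos (by omega : i ≤ t + 1),
                if_neg (by omega : ¬ t + 3 = 0), if_neg (by omega : ¬ t + 3 ≤ t + 1),
                if_neg (by omega : ¬ t + 3 = t + 2), if_pos rfl]
              intro he
              exact hyny _ (by omega) he.symm
            · simp only [if_neg (by omega : ¬ i = 0), if_pos (by omega : i ≤ t + 1),
                if_neg (by omega : ¬ j = 0), if_neg (by omega : ¬ j ≤ t + 1),
                if_neg (by omega : ¬ j = t + 2), if_neg (by omega : ¬ j = t + 3)]
              intro he
              have := hui _ _ (by omega) (by omega) he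
              omega
      · rcases Nat.lt_or_ge i (t + 3) with hi3 | hi3
        · have : i = t + 2 := by omega
          subst this
          rcases Nat.lt_or_ge j (t + 4) with hj4 | hj4
          · have : j = t + 3 := by omega
            subst this
            simp only [if_neg (by omega : ¬ t + 2 = 0), if_neg (by omega : ¬ t + 2 ≤ t + 1),
              if_pos rfl, if_neg (by omega : ¬ t + 3 = 0), if_neg (by omega : ¬ t + 3 ≤ t + 1),
              if_neg (by omega : ¬ t + 3 = t + 2)]
            exact hxy
          · simp only [if_neg (by omega : ¬ t + 2 = 0), if_neg (by omega : ¬ t + 2 ≤ t + 1),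
              if_pos rfl, if_neg (by omega : ¬ j = 0), if_neg (by omega : ¬ j ≤ t + 1),
              if_neg (by omega : ¬ j = t + 2), if_neg (by omega : ¬ j = t + 3)]
            exact hxny _ (by omega)
        · rcases Nat.lt_or_ge i (t + 4) with hi4 | hi4
          · have : i = t + 3 := by omega
            subst this
            simp only [if_neg (by omega : ¬ t + 3 = 0), if_neg (by omega : ¬ t + 3 ≤ t + 1),
              if_neg (by omega : ¬ t + 3 = t + 2), if_pos rfl, if_neg (by omega : ¬ j = 0),
              if_neg (by omega : ¬ j ≤ t + 1), if_neg (by omega : ¬ j = t + 2),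
              if_neg (by omega : ¬ j = t + 3)]
            exact hyny _ (by omega)
          · simp only [if_neg (by omega : ¬ i = 0), if_neg (by omega : ¬ i ≤ t + 1),
              if_neg (by omega : ¬ i = t + 2), if_neg (by omega : ¬ i = t + 3),
              if_neg (by omega : ¬ j = 0), if_neg (by omega : ¬ j ≤ t + 1),
              if_neg (by omega : ¬ j = t + 2), if_neg (by omega : ¬ j = t + 3)]
            intro he
            have := hui _ _ (by omega) (by omega) he
            omega

/-- Shape 4: `q, u (m-1), ..., u 0, x`. -/
lemma XY.shape4 (H : XY G m u x y) {q : V}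
    (hqt : G.Adj q (u (m - 1))) (hqo : ∀ j, j < m → j ≠ m - 1 → ¬ G.Adj q (u j))
    (hqx : ¬ G.Adj q x) (hqu : ∀ j, j < m → q ≠ u j) :
    IPG G (m + 2) (fun i => if i = 0 then q else if i ≤ m then u (m - i) else x) := by
  obtain ⟨hm, ⟨hua, hui⟩, hxu, hxo, hyu, hyo, hxny, hyny, hxy⟩ := H
  have hqnx : q ≠ x := by
    intro h; subst h
    exact hxo (m - 1) (by omega) (by omega) hqt
  apply IPG.ofLT
  · intro i j hij hj
    rcases Nat.eq_zero_or_pos i with rfl | hip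
    · rcases Nat.lt_or_ge j (m + 1) with hjm | hjm
      · simp only [if_neg (by omega : ¬ j = 0), if_pos (by omega : j ≤ m)]
        constructor
        · intro ha
          by_contra hne
          exact hqo (m - j) (by omega) (by omega) ha
        · intro h
          have : m - j = m - 1 := by omega
          rw [this]; exact hqt
      · have : j = m + 1 := by omega
        subst this
        simp only [if_neg (by omega : ¬ m + 1 = 0), if_neg (by omega : ¬ m + 1 ≤ m)]
        exact ⟨fun ha => absurd ha hqx, by omega⟩
    · rcases Nat.lt_or_ge j (m + 1) with hjm | hjm
      · simp only [if_neg (by omega : ¬ i = 0), if_neg (by omega : ¬ j = 0),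
          if_pos (by omega : i ≤ m), if_pos (by omega : j ≤ m)]
        rw [hua _ _ (by omega) (by omega)]
        omega
      · have : j = m + 1 := by omega
        subst this
        simp only [if_neg (by omega : ¬ i = 0), if_pos (by omega : i ≤ m),
          if_neg (by omega : ¬ m + 1 = 0), if_neg (by omega : ¬ m + 1 ≤ m)]
        rw [G.adj_comm]
        constructor
        · intro ha
          by_contra hne
          exact hxo (m - i) (by omega) (by omega) ha
        · intro h
          have : m - i = 0 := by omega
          rw [this]; exact hxu
  · intro i j hij hj
    rcases Nat.eq_zero_or_pos i with rfl | hip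
    · rcases Nat.lt_or_ge j (m + 1) with hjm | hjm
      · simp only [if_neg (by omega : ¬ j = 0), if_pos (by omega : j ≤ m)]
        exact hqu _ (by omega)
      · have : j = m + 1 := by omega
        subst this
        simpa using hqnx
    · rcases Nat.lt_or_ge j (m + 1) with hjm | hjm
      · simp only [if_neg (by omega : ¬ i = 0), if_neg (by omega : ¬ j = 0),
          if_pos (by omega : i ≤ m), if_pos (by omega : j ≤ m)]
        intro he
        have := hui _ _ (by omega) (by omega) he
        omega
      · have : j = m + 1 := by omega
        subst this
        simp only [if_neg (by omega : ¬ i = 0), if_pos (by omega : i ≤ m),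
          if_neg (by omega : ¬ m + 1 = 0), if_neg (by omega : ¬ m + 1 ≤ m)]
        exact fun he => hxny _ (by omega) he.symm

end Shapes


section Reach

variable (G)

/-- reachability within a vertex set -/
def Reach (s : Set V) (a b : V) : Prop :=
  Relation.ReflTransGen (fun p q : V => p ∈ s ∧ q ∈ s ∧ G.Adj p q) a b

variable {G}

lemma Reach.symm {s : Set V} {a b : V} (h : Reach G s a b) : Reach G s b a :=
  (@Relation.ReflTransGen.stdSymm V _ ⟨fun p q hpq => ⟨hpq.2.1, hpq.1, hpq.2.2.symm⟩⟩).symm _ _ h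

lemma Reach.trans {s : Set V} {a b c : V} (h : Reach G s a b) (h' : Reach G s b c) :
    Reach G s a c := Relation.ReflTransGen.trans h h'

lemma Reach.mono {s t : Set V} (hst : s ⊆ t) {a b : V} (h : Reach G s a b) :
    Reach G t a b := by
  induction h with
  | refl => exact Relation.ReflTransGen.refl
  | tail _ hbc ih => exact ih.tail ⟨hst hbc.1, hst hbc.2.1, hbc.2.2⟩

lemma reach_of_walk {s : Set V} : ∀ (p q : s) (_ : (G.induce s).Walk p q),
    Reach G s p.1 q.1 := by
  intro p q w
  induction w with
  | nil => exact Relation.ReflTransGen.refl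
  | @cons a b c h _ ih =>
    exact Relation.ReflTransGen.head ⟨a.2, b.2, h⟩ ih

lemma connected_induce_iff {s : Set V} :
    (G.induce s).Connected ↔ s.Nonempty ∧ ∀ a ∈ s, ∀ b ∈ s, Reach G s a b := by
  constructor
  · intro h
    refine ⟨⟨h.nonempty.some.1, h.nonempty.some.2⟩, fun a ha b hb => ?_⟩
    obtain ⟨w⟩ := h.preconnected ⟨a, ha⟩ ⟨b, hb⟩
    exact reach_of_walk _ _ w
  · rintro ⟨⟨v, hv⟩, h⟩
    haveI : Nonempty s := ⟨⟨v, hv⟩⟩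
    refine ⟨fun a b => ?_⟩
    have key : ∀ p q : V, Reach G s p q → ∀ (hp : p ∈ s) (hq : q ∈ s),
        (G.induce s).Reachable ⟨p, hp⟩ ⟨q, hq⟩ := by
      intro p q hr
      induction hr with
      | refl => intro hp hq; exact SimpleGraph.Reachable.refl _
      | @tail c d _ hcd ih =>
        intro hp hq
        refine (ih hp hcd.1).trans ?_
        exact SimpleGraph.Adj.reachable (by exact hcd.2.2)
    have := key a.1 b.1 (h a.1 a.2 b.1 b.2) a.2 b.2
    simpa using this

lemma reach_of_connected (h : G.Connected) (a b : V) : Reach G Set.univ a b := by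
  obtain ⟨w⟩ := h.preconnected a b
  induction w with
  | nil => exact Relation.ReflTransGen.refl
  | cons hadj _ ih => exact Relation.ReflTransGen.head ⟨trivial, trivial, hadj⟩ ih

lemma crossing {r : V → V → Prop} {P : V → Prop} {a b : V}
    (h : Relation.ReflTransGen r a b) (ha : ¬ P a) (hb : P b) :
    ∃ c d, r c d ∧ ¬ P c ∧ P d := by
  induction h with
  | refl => exact absurd hb ha
  | @tail c d hac hcd ih =>
    by_cases hPc : P c
    · exact ih hPc
    · exact ⟨c, d, hcd, hPc, hb⟩

end Reach


section CDS

open scoped Classical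

variable (G) [Fintype V]

/-- connected dominating set -/
def IsCDS (D : Finset V) : Prop :=
  (∀ v : V, v ∈ D ∨ ∃ u ∈ D, G.Adj u v) ∧ (G.induce (D : Set V)).Connected

/-- twice the number of edges inside `D` -/
noncomputable def ec (D : Finset V) : ℕ :=
  ∑ x ∈ D, (D.filter (fun y => G.Adj x y)).card

variable {G}

lemma ec_insert {a : V} {s : Finset V} (ha : a ∉ s) :
    ec G (insert a s) = ec G s + 2 * (s.filter (fun y => G.Adj a y)).card := by
  classical
  rw [ec, Finset.sum_insert ha]
  have h1 : (insert a s).filter (fun y => G.Adj a y) = s.filter (fun y => G.Adj a y) := by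
    rw [Finset.filter_insert, if_neg (G.irrefl)]
  have h2 : ∀ x ∈ s, ((insert a s).filter (fun y => G.Adj x y)).card
      = (s.filter (fun y => G.Adj x y)).card + (if G.Adj x a then 1 else 0) := by
    intro x hx
    rw [Finset.filter_insert]
    by_cases h : G.Adj x a
    · rw [if_pos h, Finset.card_insert_of_notMem (fun hmem => ha (Finset.mem_filter.1 hmem).1),
        if_pos h]
    · rw [if_neg h, if_neg h]; omega
  rw [h1, Finset.sum_congr rfl h2, Finset.sum_add_distrib]
  have h3 : (∑ x ∈ s, if G.Adj x a then 1 else 0) = (s.filter (fun y => G.Adj a y)).card := by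
    rw [Finset.card_filter]
    exact Finset.sum_congr rfl (fun x _ => by rw [G.adj_comm])
  rw [h3, ec]
  ring

lemma ec_le {s : Finset V} : ec G s ≤ Fintype.card V * Fintype.card V := by
  classical
  calc ec G s ≤ ∑ _x ∈ s, Fintype.card V :=
        Finset.sum_le_sum (fun x _ => le_trans (Finset.card_le_card (Finset.filter_subset _ _))
          (Finset.card_le_univ _))
    _ = s.card * Fintype.card V := by rw [Finset.sum_const, smul_eq_mul]
    _ ≤ Fintype.card V * Fintype.card V :=
        Nat.mul_le_mul_right _ (Finset.card_le_univ _)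

lemma exists_good_cds (hconn : G.Connected) :
    ∃ D : Finset V, IsCDS G D ∧ (∀ B, IsCDS G B → D.card ≤ B.card) ∧
      (∀ B, IsCDS G B → B.card = D.card → ec G D ≤ ec G B) := by
  classical
  set Bg := Fintype.card V * Fintype.card V + 1 with hBg
  have hecB : ∀ s : Finset V, ec G s < Bg := fun s => by
    have := ec_le (G := G) (s := s); omega
  set S : Finset (Finset V) := Finset.univ.filter (fun D => IsCDS G D) with hS
  have hne : S.Nonempty := by
    refine ⟨Finset.univ, Finset.mem_filter.2 ⟨Finset.mem_univ _, ?_, ?_⟩⟩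
    · intro v; exact Or.inl (Finset.mem_univ _)
    · rw [connected_induce_iff]
      constructor
      · obtain ⟨v⟩ := hconn.nonempty
        exact ⟨v, by simp⟩
      · intro a _ b _
        have := reach_of_connected hconn a b
        apply Reach.mono _ this
        intro z _; simp
  obtain ⟨D, hD, hmin⟩ := S.exists_min_image (fun D => D.card * Bg + ec G D) hne
  have hDc : IsCDS G D := (Finset.mem_filter.1 hD).2
  refine ⟨D, hDc, ?_, ?_⟩
  · intro B hB
    by_contra hlt
    push_neg at hlt
    have hBS : B ∈ S := Finset.mem_filter.2 ⟨Finset.mem_univ _, hB⟩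
    have := hmin B hBS
    have h1 : B.card * Bg + ec G B < (B.card + 1) * Bg := by
      have := hecB B
      nlinarith
    have h2 : (B.card + 1) * Bg ≤ D.card * Bg := Nat.mul_le_mul_right _ (by omega)
    omega
  · intro B hB hcard
    have hBS : B ∈ S := Finset.mem_filter.2 ⟨Finset.mem_univ _, hB⟩
    have := hmin B hBS
    rw [hcard] at this
    omega

end CDS


section Engine

variable (G) [Fintype V]

/-- induced path inside a finset -/
def IPD (D : Finset V) (n : ℕ) (u : ℕ → V) : Prop :=
  IPG G n u ∧ ∀ j, j < n → u j ∈ D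

variable {G}

/-- At the first endpoint of an induced path in a minimum CDS, either the path extends
inside `D`, or the endpoint has a private neighbour. -/
lemma engine {D : Finset V} (hD : IsCDS G D)
    (hmin1 : ∀ B, IsCDS G B → D.card ≤ B.card) {n : ℕ} (hn : 2 ≤ n) {w : ℕ → V}
    (hw : IPD G D n w) :
    (∃ c ∈ D, G.Adj c (w 0) ∧ (∀ j, 1 ≤ j → j < n → ¬ G.Adj c (w j)) ∧
      (∀ j, j < n → c ≠ w j)) ∨
    (∃ x, x ∉ D ∧ G.Adj x (w 0) ∧ ∀ d ∈ D, d ≠ w 0 → ¬ G.Adj x d) := by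
  classical
  obtain ⟨⟨hwa, hwi⟩, hwD⟩ := hw
  set B := D.erase (w 0) with hB
  have hne0 : ∀ j, 1 ≤ j → j < n → w j ≠ w 0 := by
    intro j h1 h2 he
    have := hwi _ _ h2 (by omega) he
    omega
  have hw1B : w 1 ∈ B := Finset.mem_erase.2 ⟨hne0 1 le_rfl (by omega), hwD 1 (by omega)⟩
  have hchain : ∀ j, 1 ≤ j → j < n → Reach G ↑B (w j) (w 1) := by
    intro j
    induction j with
    | zero => omega
    | succ i ih =>
      intro h1 h2
      rcases Nat.eq_zero_or_pos i with rfl | hip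
      · exact Relation.ReflTransGen.refl
      · have hadj : G.Adj (w (i + 1)) (w i) :=
          (hwa (i + 1) i (by omega) (by omega)).2 (Or.inr rfl)
        refine Relation.ReflTransGen.head ⟨?_, ?_, hadj⟩ (ih (by omega) (by omega))
        · exact_mod_cast Finset.mem_erase.2 ⟨hne0 _ (by omega) (by omega), hwD _ (by omega)⟩
        · exact_mod_cast Finset.mem_erase.2 ⟨hne0 _ (by omega) (by omega), hwD _ (by omega)⟩
  by_cases hall : ∀ a ∈ B, Reach G ↑B a (w 1)
  · right
    have hBconn : (G.induce (↑B : Set V)).Connected := by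
      rw [connected_induce_iff]
      refine ⟨⟨w 1, by exact_mod_cast hw1B⟩, fun a ha b hb => ?_⟩
      exact (hall a (by exact_mod_cast ha)).trans (hall b (by exact_mod_cast hb)).symm
    have hnotdom : ¬ (∀ v : V, v ∈ B ∨ ∃ u ∈ B, G.Adj u v) := by
      intro hdom
      have hcds : IsCDS G B := ⟨hdom, hBconn⟩
      have := hmin1 B hcds
      have hcard : B.card < D.card := Finset.card_erase_lt_of_mem (hwD 0 (by omega))
      omega
    push_neg at hnotdom
    obtain ⟨v, hv1, hv2⟩ := hnotdom
    have hvne : v ≠ w 0 := by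
      intro h
      exact hv2 (w 1) hw1B (by
        rw [h]; exact (hwa 1 0 (by omega) (by omega)).2 (Or.inr rfl))
    have hvD : v ∉ D := fun h => hv1 (Finset.mem_erase.2 ⟨hvne, h⟩)
    obtain ⟨d, hdD, hdv⟩ := (hD.1 v).resolve_left hvD
    have hd0 : d = w 0 := by
      by_contra hne
      exact hv2 d (Finset.mem_erase.2 ⟨hne, hdD⟩) hdv
    refine ⟨v, hvD, (hd0 ▸ hdv).symm, fun d' hd' hne' hadj' => ?_⟩
    exact hv2 d' (Finset.mem_erase.2 ⟨hne', hd'⟩) hadj'.symm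
  · left
    push_neg at hall
    obtain ⟨a₀, ha₀B, ha₀⟩ := hall
    set P : V → Prop := fun z => z = w 0 ∨ (z ∈ B ∧ Reach G ↑B z (w 1)) with hP
    have hreach : Reach G ↑D a₀ (w 1) := by
      have := (connected_induce_iff.1 hD.2).2 a₀ (by
          exact_mod_cast Finset.mem_of_mem_erase ha₀B) (w 1) (by
          exact_mod_cast hwD 1 (by omega))
      exact this
    have hPa : ¬ P a₀ := by
      rintro (h | ⟨_, hr⟩)
      · exact (Finset.mem_erase.1 ha₀B).1 h
      · exact ha₀ hr
    have hPw1 : P (w 1) := Or.inr ⟨hw1B, Relation.ReflTransGen.refl⟩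
    obtain ⟨c, d, ⟨hcD, hdD, hcd⟩, hPc, hPd⟩ := crossing hreach hPa hPw1
    have hcB : c ∈ B := Finset.mem_erase.2 ⟨fun h => hPc (Or.inl h), by exact_mod_cast hcD⟩
    have hd0 : d = w 0 := by
      rcases hPd with h | ⟨hdB, hdr⟩
      · exact h
      · exact absurd (Or.inr ⟨hcB, Relation.ReflTransGen.head
          ⟨by exact_mod_cast hcB, by exact_mod_cast hdB, hcd⟩ hdr⟩) hPc
    have hkey : ∀ j, 1 ≤ j → j < n → ¬ G.Adj c (w j) := by
      intro j h1 h2 hadj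
      refine hPc (Or.inr ⟨hcB, Relation.ReflTransGen.head
        ⟨by exact_mod_cast hcB, ?_, hadj⟩ (hchain j h1 h2)⟩)
      exact_mod_cast Finset.mem_erase.2 ⟨hne0 j h1 h2, hwD j h2⟩
    refine ⟨c, by exact_mod_cast hcD, hd0 ▸ hcd, hkey, ?_⟩
    intro j hj he
    rcases Nat.eq_zero_or_pos j with rfl | hjp
    · exact (Finset.mem_erase.1 hcB).1 he
    · exact hPc (Or.inr ⟨hcB, he ▸ hchain j hjp hj⟩)

end Engine


section Main

variable [Fintype V]

lemma main_lemma (hconn : G.Connected) {m : ℕ} (hm : 2 ≤ m)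
    (hfree : ∀ v : ℕ → V, ¬ IPG G (m + 2) v) :
    ∃ D : Finset V, IsCDS G D ∧
      ((∀ v : ℕ → V, ¬ IPD G D m v) ∨
        (∃ u : ℕ → V, IPD G D m u ∧ ∀ d ∈ D, ∃ j, j < m ∧ d = u j)) := by
  classical
  obtain ⟨D, hD, hmin1, hmin2⟩ := exists_good_cds hconn
  refine ⟨D, hD, ?_⟩
  by_cases hP : ∃ v : ℕ → V, IPD G D m v
  case neg =>
    left
    intro v hv
    exact hP ⟨v, hv⟩
  obtain ⟨u, hu⟩ := hP
  -- there is no induced path on m+1 vertices inside D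
  have hA : ¬ ∃ w : ℕ → V, IPD G D (m + 1) w := by
    rintro ⟨w, hw⟩
    rcases engine hD hmin1 (by omega) hw with ⟨c, _, hc0, hco, hcne⟩ | ⟨x, hxD, hx0, hxo⟩
    · exact hfree _ (hw.1.cons hc0 hco hcne)
    · refine hfree _ (hw.1.cons hx0 ?_ ?_)
      · intro j h1 h2
        exact hxo (w j) (hw.2 j h2) (fun he => by
          have := hw.1.2 j 0 h2 (by omega) he
          omega)
      · intro j hj he
        exact hxD (he ▸ hw.2 j hj)
  -- private neighbour x of u 0
  have hx : ∃ x, x ∉ D ∧ G.Adj x (u 0) ∧ ∀ d ∈ D, d ≠ u 0 → ¬ G.Adj x d := by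
    rcases engine hD hmin1 (by omega) hu with ⟨c, hcD, hc0, hco, hcne⟩ | h
    · exfalso
      refine hA ⟨_, hu.1.cons hc0 hco hcne, ?_⟩
      intro j hj
      rcases Nat.eq_zero_or_pos j with rfl | hj0
      · simpa using hcD
      · simp only [if_neg (by omega : ¬ j = 0)]
        exact hu.2 _ (by omega)
    · exact h
  -- private neighbour y of u (m-1), via the reversed path
  have hurev : IPD G D m (fun j => u (m - 1 - j)) := ⟨hu.1.rev, fun j hj => hu.2 _ (by omega)⟩
  have hy : ∃ y, y ∉ D ∧ G.Adj y (u (m - 1)) ∧ ∀ d ∈ D, d ≠ u (m - 1) → ¬ G.Adj y d := by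
    rcases engine hD hmin1 (by omega) hurev with ⟨c, hcD, hc0, hco, hcne⟩ | h
    · exfalso
      refine hA ⟨_, hurev.1.cons hc0 hco hcne, ?_⟩
      intro j hj
      rcases Nat.eq_zero_or_pos j with rfl | hj0
      · simpa using hcD
      · simp only [if_neg (by omega : ¬ j = 0)]
        exact hu.2 _ (by omega)
    · simpa using h
  obtain ⟨x, hxD, hxu, hxo⟩ := hx
  obtain ⟨y, hyD, hyu, hyo⟩ := hy
  have huinj := hu.1.2
  have huadj := hu.1.1
  have hxo' : ∀ j, j < m → j ≠ 0 → ¬ G.Adj x (u j) := by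
    intro j hj hj0
    exact hxo (u j) (hu.2 j hj) (fun he => hj0 (huinj j 0 hj (by omega) he))
  have hyo' : ∀ j, j < m → j ≠ m - 1 → ¬ G.Adj y (u j) := by
    intro j hj hj0
    exact hyo (u j) (hu.2 j hj) (fun he => hj0 (huinj j (m-1) hj (by omega) he))
  have hxny : ∀ j, j < m → x ≠ u j := fun j hj he => hxD (he ▸ hu.2 j hj)
  have hyny : ∀ j, j < m → y ≠ u j := fun j hj he => hyD (he ▸ hu.2 j hj)
  have hxney : x ≠ y := by
    intro he
    exact hxo' (m - 1) (by omega) (by omega) (he ▸ hyu)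
  have H : XY G m u x y := ⟨hm, hu.1, hxu, hxo', hyu, hyo', hxny, hyny, hxney⟩
  have hAxy : G.Adj x y := by
    by_contra hnxy
    exact hfree _ (H.shape2 hnxy)
  -- the KILL lemma
  have KILL : ∀ (q : V) (t : ℕ), t ≤ m - 1 →
      (G.Adj q (u t) ∨ (t + 1 < m ∧ G.Adj q (u (t + 1)))) →
      (∀ j, j < m → j ≠ t → j ≠ t + 1 → ¬ G.Adj q (u j)) →
      ¬ G.Adj q x → ¬ G.Adj q y → (∀ j, j < m → q ≠ u j) → False := by
    intro q t ht hadj ho hqx hqy hqu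
    by_cases hqt : G.Adj q (u t)
    · rcases Nat.lt_or_ge t (m - 1) with h2 | h2
      · exact hfree _ (H.shape3 hAxy (by omega) hqt ho hqx hqy hqu)
      · have htm : t = m - 1 := by omega
        subst htm
        refine hfree _ (H.shape4 hqt ?_ hqx hqu)
        intro j hj hjne
        exact ho j hj hjne (by omega)
    · obtain ⟨ht1, hqt1⟩ := hadj.resolve_left hqt
      have ho' : ∀ j, j < m → j ≠ t + 1 → j ≠ t + 2 → ¬ G.Adj q (u j) := by
        intro j hj h1 h2
        rcases eq_or_ne j t with rfl | h3
        · exact hqt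
        · exact ho j hj h3 h1
      rcases Nat.lt_or_ge (t + 1) (m - 1) with h2 | h2
      · exact hfree _ (H.shape3 hAxy (by omega) hqt1 ho' hqx hqy hqu)
      · have htm : t + 1 = m - 1 := by omega
        refine hfree _ (H.shape4 (htm ▸ hqt1) ?_ hqx hqu)
        intro j hj hjne
        exact ho' j hj (by omega) (by omega)
  by_cases hE : ∀ d ∈ D, ∃ j, j < m ∧ d = u j
  · right
    exact ⟨u, hu, hE⟩
  exfalso
  push_neg at hE
  obtain ⟨e₀, he₀D, he₀⟩ := hE
  -- find an edge from outside the path into the path, inside D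
  have hreach : Reach G ↑D e₀ (u 0) :=
    (connected_induce_iff.1 hD.2).2 e₀ (by exact_mod_cast he₀D) (u 0)
      (by exact_mod_cast hu.2 0 (by omega))
  obtain ⟨c, d, ⟨hcD, hdD, hcd⟩, hPc, hPd⟩ := crossing (P := fun z => ∃ j, j < m ∧ z = u j)
    hreach (by rintro ⟨j, hj, he⟩; exact he₀ j hj he) ⟨0, by omega, rfl⟩
  obtain ⟨s, hs, rfl⟩ := hPd
  have hcR : ∀ j, j < m → c ≠ u j := by
    intro j hj he
    exact hPc ⟨j, hj, he⟩
  have hcDm : c ∈ D := by exact_mod_cast hcD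
  have hcx : ¬ G.Adj c x := fun h => hxo c hcDm (fun he => hcR 0 (by omega) he) h.symm
  have hcy : ¬ G.Adj c y := fun h => hyo c hcDm (fun he => hcR (m-1) (by omega) he) h.symm
  rcases Nat.lt_or_ge m 3 with hm3 | hm3
  · -- m = 2 : direct kill
    have hm2 : m = 2 := by omega
    refine KILL c 0 (by omega) ?_ ?_ hcx hcy hcR
    · rcases Nat.eq_zero_or_pos s with rfl | hs1
      · exact Or.inl hcd
      · have : s = 1 := by omega
        subst this
        exact Or.inr ⟨by omega, hcd⟩
    · intro j hj h1 h2
      omega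
  · -- m ≥ 3 : the swap argument
    set t := min s (m - 2) with htdef
    have ht2 : t ≤ m - 2 := min_le_right _ _
    have hts : s = t ∨ s = t + 1 := by omega
    have hut : u t ∈ D := hu.2 t (by omega)
    have hut1 : u (t + 1) ∈ D := hu.2 (t + 1) (by omega)
    have hune : u t ≠ u (t + 1) := fun h => by
      have := huinj t (t + 1) (by omega) (by omega) h; omega
    set A := (D.erase (u t)).erase (u (t + 1)) with hAdef
    have hmemA : ∀ z, z ∈ A ↔ z ∈ D ∧ z ≠ u t ∧ z ≠ u (t + 1) := by
      intro z
      simp only [hAdef, Finset.mem_erase]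
      tauto
    have huA : ∀ j, j < m → j ≠ t → j ≠ t + 1 → u j ∈ A := by
      intro j hj h1 h2
      refine (hmemA _).2 ⟨hu.2 j hj, fun he => ?_, fun he => ?_⟩
      · exact h1 (huinj j t hj (by omega) he)
      · exact h2 (huinj j (t + 1) hj (by omega) he)
    have hxA : x ∉ A := fun h => hxD ((hmemA _).1 h).1
    have hyA : y ∉ A := fun h => hyD ((hmemA _).1 h).1
    set D' := insert x (insert y A) with hD'def
    have hmemD' : ∀ z, z ∈ D' ↔ z = x ∨ z = y ∨ z ∈ A := by
      intro z; simp [hD'def]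
    have hxD' : x ∈ D' := (hmemD' x).2 (Or.inl rfl)
    have hyD' : y ∈ D' := (hmemD' y).2 (Or.inr (Or.inl rfl))
    have huD' : ∀ j, j < m → j ≠ t → j ≠ t + 1 → u j ∈ D' :=
      fun j h1 h2 h3 => (hmemD' _).2 (Or.inr (Or.inr (huA j h1 h2 h3)))
    have hAD' : ∀ z, z ∈ A → z ∈ D' := fun z hz => (hmemD' z).2 (Or.inr (Or.inr hz))
    -- domination of D'
    have hdom' : ∀ v : V, v ∈ D' ∨ ∃ d ∈ D', G.Adj d v := by
      intro v
      by_cases hv : v ∈ D'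
      · exact Or.inl hv
      right
      by_cases hvt : v = u t
      · subst hvt
        rcases Nat.eq_zero_or_pos t with ht0 | ht0
        · exact ⟨x, hxD', ht0 ▸ hxu⟩
        · exact ⟨u (t - 1), huD' _ (by omega) (by omega) (by omega),
            (huadj (t - 1) t (by omega) (by omega)).2 (Or.inl (by omega))⟩
      by_cases hvt1 : v = u (t + 1)
      · subst hvt1
        rcases Nat.lt_or_ge (t + 1) (m - 1) with ht1 | ht1
        · exact ⟨u (t + 2), huD' _ (by omega) (by omega) (by omega),
            (huadj (t + 2) (t + 1) (by omega) (by omega)).2 (Or.inr rfl)⟩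
        · have : t + 1 = m - 1 := by omega
          exact ⟨y, hyD', this ▸ hyu⟩
      have hvD : v ∉ D := by
        intro h
        exact hv ((hmemD' v).2 (Or.inr (Or.inr ((hmemA v).2 ⟨h, hvt, hvt1⟩))))
      by_cases hvx : G.Adj x v
      · exact ⟨x, hxD', hvx⟩
      by_cases hvy : G.Adj y v
      · exact ⟨y, hyD', hvy⟩
      by_cases hAd : ∃ d ∈ A, G.Adj d v
      · obtain ⟨d, hd1, hd2⟩ := hAd
        exact ⟨d, hAD' d hd1, hd2⟩
      exfalso
      push_neg at hAd
      obtain ⟨d₀, hd₀D, hd₀v⟩ := (hD.1 v).resolve_left hvD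
      have hd₀p : d₀ = u t ∨ d₀ = u (t + 1) := by
        by_contra hcon
        push_neg at hcon
        exact hAd d₀ ((hmemA _).2 ⟨hd₀D, hcon.1, hcon.2⟩) hd₀v
      refine KILL v t (by omega) ?_ ?_ (fun h => hvx h.symm) (fun h => hvy h.symm) ?_
      · rcases hd₀p with rfl | rfl
        · exact Or.inl hd₀v.symm
        · exact Or.inr ⟨by omega, hd₀v.symm⟩
      · intro j hj h1 h2 hadj
        exact hAd (u j) (huA j hj h1 h2) hadj.symm
      · intro j hj he
        exact hvD (he ▸ hu.2 j hj)
    -- reachability claims towards x inside D'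
    have claim1 : ∀ j, j < t → Reach G ↑D' (u j) x := by
      intro j
      induction j with
      | zero =>
        intro hj
        exact Relation.ReflTransGen.single
          ⟨Finset.mem_coe.2 (huD' 0 (by omega) (by omega) (by omega)),
           Finset.mem_coe.2 hxD', hxu.symm⟩
      | succ i ih =>
        intro hj
        refine Relation.ReflTransGen.head
          ⟨Finset.mem_coe.2 (huD' (i + 1) (by omega) (by omega) (by omega)),
           Finset.mem_coe.2 (huD' i (by omega) (by omega) (by omega)),
           (huadj (i + 1) i (by omega) (by omega)).2 (Or.inr rfl)⟩ (ih (by omega))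
    have claim2 : ∀ r j, t + 1 < j → j < m → m - 1 - j ≤ r → Reach G ↑D' (u j) x := by
      intro r
      induction r with
      | zero =>
        intro j h1 h2 h3
        have hj : j = m - 1 := by omega
        subst hj
        refine Relation.ReflTransGen.head
          ⟨Finset.mem_coe.2 (huD' (m - 1) (by omega) (by omega) (by omega)),
           Finset.mem_coe.2 hyD', hyu.symm⟩
          (Relation.ReflTransGen.single
            ⟨Finset.mem_coe.2 hyD', Finset.mem_coe.2 hxD', hAxy.symm⟩)
      | succ r ih =>
        intro j h1 h2 h3
        rcases Nat.lt_or_ge (j + 1) m with hj1 | hj1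
        · refine Relation.ReflTransGen.head
            ⟨Finset.mem_coe.2 (huD' j (by omega) (by omega) (by omega)),
             Finset.mem_coe.2 (huD' (j + 1) (by omega) (by omega) (by omega)),
             (huadj j (j + 1) (by omega) (by omega)).2 (Or.inl rfl)⟩
            (ih (j + 1) (by omega) (by omega) (by omega))
        · have hj : j = m - 1 := by omega
          subst hj
          refine Relation.ReflTransGen.head
            ⟨Finset.mem_coe.2 (huD' (m - 1) (by omega) (by omega) (by omega)),
             Finset.mem_coe.2 hyD', hyu.symm⟩
            (Relation.ReflTransGen.single
              ⟨Finset.mem_coe.2 hyD', Finset.mem_coe.2 hxD', hAxy.symm⟩)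
    have hclaims : ∀ j, j < m → j ≠ t → j ≠ t + 1 → Reach G ↑D' (u j) x := by
      intro j hj h1 h2
      rcases Nat.lt_or_ge j t with h | h
      · exact claim1 j h
      · exact claim2 (m - 1 - j) j (by omega) hj le_rfl
    -- every member of D' reaches x
    have hax : ∀ a, a ∈ D' → Reach G ↑D' a x := by
      intro a haD'
      rcases (hmemD' a).1 haD' with rfl | rfl | haA
      · exact Relation.ReflTransGen.refl
      · exact Relation.ReflTransGen.single
          ⟨Finset.mem_coe.2 hyD', Finset.mem_coe.2 hxD', hAxy.symm⟩
      by_contra hnr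
      set PP : V → Prop := fun z => (z = u t ∨ z = u (t + 1)) ∨
        (z ∈ A ∧ Reach G ↑D' z x) with hPPdef
      have hPw : PP (if 1 ≤ t then u 0 else u (m - 1)) := by
        split
        case isTrue h =>
          exact Or.inr ⟨huA 0 (by omega) (by omega) (by omega), claim1 0 (by omega)⟩
        case isFalse h =>
          refine Or.inr ⟨huA (m - 1) (by omega) (by omega) (by omega),
            claim2 0 (m - 1) (by omega) (by omega) (by omega)⟩
      have hwD : (if 1 ≤ t then u 0 else u (m - 1)) ∈ D := by
        split <;> exact hu.2 _ (by omega)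
      have hreach2 : Reach G ↑D a (if 1 ≤ t then u 0 else u (m - 1)) :=
        (connected_induce_iff.1 hD.2).2 a
          (Finset.mem_coe.2 (((hmemA a).1 haA).1)) _ (Finset.mem_coe.2 hwD)
      have hPa : ¬ PP a := by
        rintro ((h | h) | ⟨_, hr⟩)
        · exact ((hmemA a).1 haA).2.1 h
        · exact ((hmemA a).1 haA).2.2 h
        · exact hnr hr
      obtain ⟨c', d', ⟨hc'D, hd'D, hc'd⟩, hPc', hPd'⟩ := crossing hreach2 hPa hPw
      have hc'A : c' ∈ A := (hmemA _).2 ⟨by exact_mod_cast hc'D,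
        fun h => hPc' (Or.inl (Or.inl h)), fun h => hPc' (Or.inl (Or.inr h))⟩
      have hd'pair : d' = u t ∨ d' = u (t + 1) := by
        rcases hPd' with h | ⟨hd'A, hd'r⟩
        · exact h
        · exact absurd (Or.inr ⟨hc'A, Relation.ReflTransGen.head
            ⟨Finset.mem_coe.2 (hAD' _ hc'A), Finset.mem_coe.2 (hAD' _ hd'A), hc'd⟩ hd'r⟩) hPc'
      have hc'o : ∀ j, j < m → j ≠ t → j ≠ t + 1 → ¬ G.Adj c' (u j) := by
        intro j hj h1 h2 hadj
        refine hPc' (Or.inr ⟨hc'A, Relation.ReflTransGen.head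
          ⟨Finset.mem_coe.2 (hAD' _ hc'A), Finset.mem_coe.2 (huD' j hj h1 h2), hadj⟩
          (hclaims j hj h1 h2)⟩)
      have hc'R : ∀ j, j < m → c' ≠ u j := by
        intro j hj he
        by_cases h1 : j = t
        · exact ((hmemA c').1 hc'A).2.1 (h1 ▸ he)
        by_cases h2 : j = t + 1
        · exact ((hmemA c').1 hc'A).2.2 (h2 ▸ he)
        exact hPc' (Or.inr ⟨hc'A, he ▸ hclaims j hj h1 h2⟩)
      have hc'x : ¬ G.Adj c' x :=
        fun h => hxo c' ((hmemA c').1 hc'A).1 (hc'R 0 (by omega)) h.symm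
      have hc'y : ¬ G.Adj c' y :=
        fun h => hyo c' ((hmemA c').1 hc'A).1 (hc'R (m - 1) (by omega)) h.symm
      refine KILL c' t (by omega) ?_ hc'o hc'x hc'y hc'R
      rcases hd'pair with rfl | rfl
      · exact Or.inl hc'd
      · exact Or.inr ⟨by omega, hc'd⟩
    have hconn' : (G.induce (↑D' : Set V)).Connected := by
      rw [connected_induce_iff]
      refine ⟨⟨x, Finset.mem_coe.2 hxD'⟩, fun a ha b hb => ?_⟩
      exact (hax a (by exact_mod_cast ha)).trans (hax b (by exact_mod_cast hb)).symm
    -- cardinality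
    have hcard2 : 2 ≤ D.card := Finset.one_lt_card.2 ⟨u t, hut, u (t + 1), hut1, hune⟩
    have hcardA : A.card + 2 = D.card := by
      rw [hAdef, Finset.card_erase_of_mem (Finset.mem_erase.2 ⟨fun h => hune h.symm, hut1⟩),
        Finset.card_erase_of_mem hut]
      omega
    have hxiy : x ∉ insert y A := by
      simp only [Finset.mem_insert]
      rintro (h | h)
      · exact hxney h
      · exact hxA h
    have hcard : D'.card = D.card := by
      rw [hD'def, Finset.card_insert_of_notMem hxiy, Finset.card_insert_of_notMem hyA]
      omega
    -- edge counts
    have hadjT : G.Adj (u t) (u (t + 1)) := (huadj t (t + 1) (by omega) (by omega)).2 (Or.inl rfl)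
    have hnt1A : u (t + 1) ∉ A := fun h => ((hmemA _).1 h).2.2 rfl
    have hntA : u t ∉ insert (u (t + 1)) A := by
      simp only [Finset.mem_insert]
      rintro (h | h)
      · exact hune h
      · exact ((hmemA _).1 h).2.1 rfl
    have hDrepr : D = insert (u t) (insert (u (t + 1)) A) := by
      ext z
      simp only [Finset.mem_insert, hmemA]
      constructor
      · intro hz
        by_cases h1 : z = u t
        · exact Or.inl h1
        by_cases h2 : z = u (t + 1)
        · exact Or.inr (Or.inl h2)
        exact Or.inr (Or.inr ⟨hz, h1, h2⟩)
      · rintro (rfl | rfl | ⟨h, _, _⟩)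
        · exact hut
        · exact hut1
        · exact h
    have hfins : (insert (u (t + 1)) A).filter (fun z => G.Adj (u t) z)
        = insert (u (t + 1)) (A.filter (fun z => G.Adj (u t) z)) := by
      rw [Finset.filter_insert, if_pos hadjT]
    have hfins2 : (insert y A).filter (fun z => G.Adj x z)
        = insert y (A.filter (fun z => G.Adj x z)) := by
      rw [Finset.filter_insert, if_pos hAxy]
    have hecD : ec G D = ec G A + 2 * (A.filter (fun z => G.Adj (u (t + 1)) z)).card
        + 2 * ((A.filter (fun z => G.Adj (u t) z)).card + 1) := by
      rw [hDrepr, ec_insert hntA, ec_insert hnt1A, hfins,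
        Finset.card_insert_of_notMem (fun h => hnt1A (Finset.mem_filter.1 h).1)]
    have hecD' : ec G D' = ec G A + 2 * (A.filter (fun z => G.Adj y z)).card
        + 2 * ((A.filter (fun z => G.Adj x z)).card + 1) := by
      rw [hD'def, ec_insert hxiy, ec_insert hyA, hfins2,
        Finset.card_insert_of_notMem (fun h => hyA (Finset.mem_filter.1 h).1)]
    -- bounds
    have hbx : (A.filter (fun z => G.Adj x z)).card ≤ if 1 ≤ t then 1 else 0 := by
      split
      case isTrue h =>
        have : (A.filter (fun z => G.Adj x z)) ⊆ {u 0} := by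
          intro z hz
          obtain ⟨hz1, hz2⟩ := Finset.mem_filter.1 hz
          rw [Finset.mem_singleton]
          by_contra hne
          exact hxo z ((hmemA z).1 hz1).1 hne hz2
        simpa using Finset.card_le_card this
      case isFalse h =>
        have : (A.filter (fun z => G.Adj x z)) = ∅ := by
          rw [Finset.eq_empty_iff_forall_notMem]
          intro z hz
          obtain ⟨hz1, hz2⟩ := Finset.mem_filter.1 hz
          by_cases hne : z = u 0
          · refine ((hmemA z).1 hz1).2.1 ?_
            rw [hne]
            have ht0 : t = 0 := by omega
            rw [ht0]
          · exact hxo z ((hmemA z).1 hz1).1 hne hz2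
        simp [this]
    have hby : (A.filter (fun z => G.Adj y z)).card ≤ if t + 1 < m - 1 then 1 else 0 := by
      split
      case isTrue h =>
        have : (A.filter (fun z => G.Adj y z)) ⊆ {u (m - 1)} := by
          intro z hz
          obtain ⟨hz1, hz2⟩ := Finset.mem_filter.1 hz
          rw [Finset.mem_singleton]
          by_contra hne
          exact hyo z ((hmemA z).1 hz1).1 hne hz2
        simpa using Finset.card_le_card this
      case isFalse h =>
        have : (A.filter (fun z => G.Adj y z)) = ∅ := by
          rw [Finset.eq_empty_iff_forall_notMem]
          intro z hz
          obtain ⟨hz1, hz2⟩ := Finset.mem_filter.1 hz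
          by_cases hne : z = u (m - 1)
          · refine ((hmemA z).1 hz1).2.2 ?_
            have : t + 1 = m - 1 := by omega
            rw [hne, this]
          · exact hyo z ((hmemA z).1 hz1).1 hne hz2
        simp [this]
    have hcA : c ∈ A := (hmemA c).2 ⟨hcDm, hcR t (by omega), hcR (t + 1) (by omega)⟩
    have hlow : (if 1 ≤ t then 1 else 0) + (if t + 1 < m - 1 then 1 else 0) + 1 ≤
        (A.filter (fun z => G.Adj (u t) z)).card
        + (A.filter (fun z => G.Adj (u (t + 1)) z)).card := by
      have hmem1 : t + 1 < m - 1 → u (t + 2) ∈ A.filter (fun z => G.Adj (u (t + 1)) z) := by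
        intro h
        exact Finset.mem_filter.2 ⟨huA (t + 2) (by omega) (by omega) (by omega),
          (huadj (t + 1) (t + 2) (by omega) (by omega)).2 (Or.inl rfl)⟩
      have hmem0 : 1 ≤ t → u (t - 1) ∈ A.filter (fun z => G.Adj (u t) z) := by
        intro h
        exact Finset.mem_filter.2 ⟨huA (t - 1) (by omega) (by omega) (by omega),
          (huadj t (t - 1) (by omega) (by omega)).2 (Or.inr (by omega))⟩
      rcases hts with heq | heq
      · -- c is adjacent to u t
        have hmemc : c ∈ A.filter (fun z => G.Adj (u t) z) :=
          Finset.mem_filter.2 ⟨hcA, by rw [← heq]; exact hcd.symm⟩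
        split
        case isTrue h =>
          have hpair : {u (t - 1), c} ⊆ A.filter (fun z => G.Adj (u t) z) := by
            intro z hz
            rcases Finset.mem_insert.1 hz with rfl | hz
            · exact hmem0 h
            · rw [Finset.mem_singleton.1 hz]; exact hmemc
          have h2 : ({u (t - 1), c} : Finset V).card = 2 :=
            Finset.card_pair (fun he => hcR (t - 1) (by omega) he.symm)
          have := Finset.card_le_card hpair
          split
          case isTrue h3 =>
            have := Finset.card_le_card (Finset.singleton_subset_iff.2 (hmem1 h3))
            simp only [Finset.card_singleton] at this
            omega
          case isFalse h3 => omega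
        case isFalse h =>
          have := Finset.card_le_card (Finset.singleton_subset_iff.2 hmemc)
          simp only [Finset.card_singleton] at this
          split
          case isTrue h3 =>
            have := Finset.card_le_card (Finset.singleton_subset_iff.2 (hmem1 h3))
            simp only [Finset.card_singleton] at this
            omega
          case isFalse h3 => omega
      · -- c is adjacent to u (t+1)
        have hmemc : c ∈ A.filter (fun z => G.Adj (u (t + 1)) z) :=
          Finset.mem_filter.2 ⟨hcA, by rw [← heq]; exact hcd.symm⟩
        split
        case isTrue h =>
          have := Finset.card_le_card (Finset.singleton_subset_iff.2 (hmem0 h))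
          simp only [Finset.card_singleton] at this
          split
          case isTrue h3 =>
            have hpair : {u (t + 2), c} ⊆ A.filter (fun z => G.Adj (u (t + 1)) z) := by
              intro z hz
              rcases Finset.mem_insert.1 hz with rfl | hz
              · exact hmem1 h3
              · rw [Finset.mem_singleton.1 hz]; exact hmemc
            have h2 : ({u (t + 2), c} : Finset V).card = 2 :=
              Finset.card_pair (fun he => hcR (t + 2) (by omega) he.symm)
            have := Finset.card_le_card hpair
            omega
          case isFalse h3 =>
            have h4 := Finset.card_le_card (Finset.singleton_subset_iff.2 hmemc)
            simp only [Finset.card_singleton] at h4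
            omega
        case isFalse h =>
          split
          case isTrue h3 =>
            have hpair : {u (t + 2), c} ⊆ A.filter (fun z => G.Adj (u (t + 1)) z) := by
              intro z hz
              rcases Finset.mem_insert.1 hz with rfl | hz
              · exact hmem1 h3
              · rw [Finset.mem_singleton.1 hz]; exact hmemc
            have h2 : ({u (t + 2), c} : Finset V).card = 2 :=
              Finset.card_pair (fun he => hcR (t + 2) (by omega) he.symm)
            have := Finset.card_le_card hpair
            omega
          case isFalse h3 =>
            have := Finset.card_le_card (Finset.singleton_subset_iff.2 hmemc)
            simp only [Finset.card_singleton] at this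
            omega
    have hfinal := hmin2 D' ⟨hdom', hconn'⟩ hcard
    -- conclude
    rcases le_or_gt 1 t with h1 | h1 <;> rcases Nat.lt_or_ge (t + 1) (m - 1) with h3 | h3 <;>
      split_ifs at hbx hby hlow <;> omega

end Main


section Convert

/-- an `IPG` yields a path-graph embedding -/
def IPG.toEmb {n : ℕ} {u : ℕ → V} (h : IPG G n u) : SimpleGraph.pathGraph n ↪g G where
  toFun := fun i => u i.val
  inj' := fun i j hij => Fin.ext (h.2 _ _ i.isLt j.isLt hij)
  map_rel_iff' := by
    intro i j
    show G.Adj (u i.val) (u j.val) ↔ _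
    rw [SimpleGraph.pathGraph_adj, h.1 i.val j.val i.isLt j.isLt]
    omega

/-- an `IPD` yields a path-graph embedding into the induced subgraph -/
def IPD.toEmb {D : Finset V} {n : ℕ} {u : ℕ → V} (h : IPD G D n u) :
    SimpleGraph.pathGraph n ↪g G.induce (↑D : Set V) where
  toFun := fun i => ⟨u i.val, Finset.mem_coe.2 (h.2 _ i.isLt)⟩
  inj' := fun i j hij => Fin.ext (h.1.2 _ _ i.isLt j.isLt (congrArg Subtype.val hij))
  map_rel_iff' := by
    intro i j
    simp only [Function.Embedding.coeFn_mk, SimpleGraph.comap_adj, Function.Embedding.coe_subtype]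
    show G.Adj (u i.val) (u j.val) ↔ _
    rw [SimpleGraph.pathGraph_adj, h.1.1 i.val j.val i.isLt j.isLt]
    omega

lemma emb_to_ipd {D : Finset V} {n : ℕ} (hn : 0 < n)
    (e : SimpleGraph.pathGraph n ↪g G.induce (↑D : Set V)) :
    ∃ u : ℕ → V, IPD G D n u := by
  refine ⟨fun j => if h : j < n then (e ⟨j, h⟩).1 else (e ⟨0, hn⟩).1, ⟨⟨?_, ?_⟩, ?_⟩⟩
  · intro i j hi hj
    simp only [dif_pos hi, dif_pos hj]
    have := e.map_rel_iff (a := ⟨i, hi⟩) (b := ⟨j, hj⟩)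
    rw [SimpleGraph.pathGraph_adj] at this
    simp only [SimpleGraph.comap_adj, Function.Embedding.coe_subtype] at this
    rw [this]
    omega
  · intro i j hi hj he
    simp only [dif_pos hi, dif_pos hj] at he
    have := e.injective (Subtype.ext he)
    exact congrArg Fin.val this
  · intro j hj
    simp only [dif_pos hj]
    exact Finset.mem_coe.1 (e ⟨j, hj⟩).2

end Convert

end PkAux

/-- For every `k ≥ 4`, every finite connected `P_k`-free graph has a connected dominating
set `D` whose induced subgraph is either `P_{k-2}`-free or isomorphic to `P_{k-2}`. -/
theorem pk_free_connected_dominating_set {V : Type*} [Fintype V] (k : ℕ) (hk : 4 ≤ k)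
    (G : SimpleGraph V) (hconn : G.Connected)
    (hfree : IsEmpty (SimpleGraph.pathGraph k ↪g G)) :
    ∃ D : Set V,
      (∀ v : V, v ∈ D ∨ ∃ u ∈ D, G.Adj u v) ∧
      (G.induce D).Connected ∧
      (IsEmpty (SimpleGraph.pathGraph (k - 2) ↪g G.induce D) ∨
        Nonempty (G.induce D ≃g SimpleGraph.pathGraph (k - 2))) := by
  classical
  set m := k - 2 with hmdef
  have hm2 : 2 ≤ m := by omega
  have hkm : k = m + 2 := by omega
  have hfree' : ∀ v : ℕ → V, ¬ PkAux.IPG G (m + 2) v := by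
    intro v hv
    exact (hkm ▸ hfree).false hv.toEmb
  obtain ⟨D, hD, hgood⟩ := PkAux.main_lemma (G := G) hconn hm2 hfree'
  refine ⟨(↑D : Set V), ?_, hD.2, ?_⟩
  · intro v
    rcases hD.1 v with h | ⟨d, hd1, hd2⟩
    · exact Or.inl (Finset.mem_coe.2 h)
    · exact Or.inr ⟨d, Finset.mem_coe.2 hd1, hd2⟩
  · rcases hgood with h | ⟨u, hu, hsurj⟩
    · left
      refine ⟨fun e => ?_⟩
      obtain ⟨u, hu⟩ := PkAux.emb_to_ipd (by omega : 0 < m) e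
      exact h u hu
    · right
      have hbij : Function.Bijective
          (fun i : Fin m => (⟨u i.val, Finset.mem_coe.2 (hu.2 _ i.isLt)⟩ :
            (↑D : Set V))) := by
        constructor
        · intro i j hij
          exact Fin.ext (hu.1.2 _ _ i.isLt j.isLt (congrArg Subtype.val hij))
        · rintro ⟨d, hd⟩
          obtain ⟨j, hj, hd2⟩ := hsurj d (Finset.mem_coe.1 hd)
          exact ⟨⟨j, hj⟩, Subtype.ext hd2.symm⟩
      refine ⟨(SimpleGraph.Iso.symm ⟨Equiv.ofBijective _ hbij, ?_⟩)⟩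
      intro i j
      simp only [Equiv.ofBijective_apply, SimpleGraph.comap_adj, Function.Embedding.coe_subtype]
      rw [SimpleGraph.pathGraph_adj, hu.1.1 i.val j.val i.isLt j.isLt]
      omega
end

section
/- Let G be a finite simple graph with a valid tree partition (T, β), and let {u, v} be an edge of G with u ∈ β(s) and v ∈ β(t) for nodes s, t of T. Then, in T, either s is an ancestor of t or t is an ancestor of s. -/
/-- In a tree `T` rooted at `r`, the node `a` is an ancestor of `b` if `a` lies on the
unique path from `r` to `b`; equivalently, distances satisfy
`dist r a + dist a b = dist r b`. -/
def Ancestor {ι : Type*} (T : SimpleGraph ι) (r a b : ι) : Prop :=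
  T.dist r a + T.dist a b = T.dist r b

/-- `Bag T r β s` is the vertex set of `G_s`: the union of `β t` over all descendants `t`
of `s` (including `s` itself) in the tree `T` rooted at `r`. -/
def Bag {V ι : Type*} (T : SimpleGraph ι) (r : ι) (β : ι → Set V) (s : ι) : Set V :=
  ⋃ t ∈ {t | Ancestor T r s t}, β t

/-- `(T, β)` (with `T` rooted at `r`) is a valid tree partition of the graph `G`:
`T` is a tree, the sets `β s` are nonempty and partition `V(G)`, and moreover
(1) each `β s` induces a clique or a `P₃`;
(2) each `β s` dominates `G_s` (whose vertex set is `Bag T r β s`);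
(3) for each `s`, the connected components of `G_s - β s` are exactly the graphs `G_t`
for the children `t` of `s` (expressed as: two vertices of `G_s - β s` are reachable in
`G_s - β s` if and only if they both lie in `G_t` for some child `t` of `s`). -/
def IsValidTreePartition {V ι : Type*} (G : SimpleGraph V) (T : SimpleGraph ι) (r : ι)
    (β : ι → Set V) : Prop :=
  T.IsTree ∧
  (∀ s, (β s).Nonempty) ∧
  (∀ v : V, ∃! s, v ∈ β s) ∧
  (∀ s, G.IsClique (β s) ∨ Nonempty (G.induce (β s) ≃g SimpleGraph.pathGraph 3)) ∧
  (∀ s, ∀ v ∈ Bag T r β s, v ∈ β s ∨ ∃ u ∈ β s, G.Adj u v) ∧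
  (∀ s, ∀ u v : ↥(Bag T r β s \ β s),
      ((G.induce (Bag T r β s \ β s)).Reachable u v ↔
        ∃ t, T.Adj s t ∧ Ancestor T r s t ∧ (u : V) ∈ Bag T r β t ∧ (v : V) ∈ Bag T r β t))

/-!
Walk down from the root along common ancestors of `s` and `t`. At a common ancestor `w`
different from both, `u` and `v` lie in `G_w - β w` and are adjacent there, so by the
component condition they lie in `G_c` for one child `c` of `w`, i.e. `c` is a deeper common
ancestor. Depth is bounded by that of `s`, so the descent stops at `s` or at `t`.
-/

namespace Ancestor

variable {ι : Type*} {T : SimpleGraph ι} {r a b : ι}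

theorem root (T : SimpleGraph ι) (r a : ι) : Ancestor T r r a := by
  simp [Ancestor]

theorem dist_root_le (h : Ancestor T r a b) : T.dist r a ≤ T.dist r b := by
  unfold Ancestor at h
  omega

theorem dist_root_lt (hT : T.Connected) (h : Ancestor T r a b) (hab : a ≠ b) :
    T.dist r a < T.dist r b := by
  have hpos : 0 < T.dist a b := hT.pos_dist_of_ne hab
  unfold Ancestor at h
  omega

end Ancestor

namespace IsValidTreePartition

variable {V ι : Type*} {G : SimpleGraph V} {T : SimpleGraph ι} {r : ι} {β : ι → Set V}
  {u v : V} {s s' t : ι}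

theorem eq_of_mem (h : IsValidTreePartition G T r β) (hu : u ∈ β s) (hu' : u ∈ β s') :
    s = s' :=
  (h.2.2.1 u).unique hu hu'

theorem mem_bag_iff {w : ι} (h : IsValidTreePartition G T r β) (hu : u ∈ β s) :
    u ∈ Bag T r β w ↔ Ancestor T r w s := by
  refine ⟨fun huw => ?_, fun hws => Set.mem_biUnion hws hu⟩
  obtain ⟨x, hwx, hux⟩ := Set.mem_iUnion₂.mp huw
  exact h.eq_of_mem hux hu ▸ hwx

theorem exists_child_common_ancestor {w : ι} (h : IsValidTreePartition G T r β)
    (huv : G.Adj u v) (hu : u ∈ β s) (hv : v ∈ β t) (hws : Ancestor T r w s)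
    (hwt : Ancestor T r w t) (hsw : w ≠ s) (htw : w ≠ t) :
    ∃ c, T.Adj w c ∧ Ancestor T r w c ∧ Ancestor T r c s ∧ Ancestor T r c t := by
  have huw : u ∉ β w := fun hu' => hsw (h.eq_of_mem hu' hu)
  have hvw : v ∉ β w := fun hv' => htw (h.eq_of_mem hv' hv)
  let u' : ↥(Bag T r β w \ β w) := ⟨u, (h.mem_bag_iff hu).mpr hws, huw⟩
  let v' : ↥(Bag T r β w \ β w) := ⟨v, (h.mem_bag_iff hv).mpr hwt, hvw⟩
  have hreach : (G.induce (Bag T r β w \ β w)).Reachable u' v' :=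
    SimpleGraph.Adj.reachable (G := G.induce _) huv
  obtain ⟨c, hwc, hanc, huc, hvc⟩ := (h.2.2.2.2.2 w u' v').mp hreach
  exact ⟨c, hwc, hanc, (h.mem_bag_iff hu).mp huc, (h.mem_bag_iff hv).mp hvc⟩

theorem ancestor_or_ancestor_of_common_ancestor {w : ι} (h : IsValidTreePartition G T r β)
    (huv : G.Adj u v) (hu : u ∈ β s) (hv : v ∈ β t) (hws : Ancestor T r w s)
    (hwt : Ancestor T r w t) : Ancestor T r s t ∨ Ancestor T r t s := by
  by_cases hsw : w = s
  · exact .inl (hsw ▸ hwt)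
  by_cases htw : w = t
  · exact .inr (htw ▸ hws)
  obtain ⟨c, hwc, hanc, hcs, hct⟩ :=
    h.exists_child_common_ancestor huv hu hv hws hwt hsw htw
  exact h.ancestor_or_ancestor_of_common_ancestor huv hu hv hcs hct
termination_by T.dist r s - T.dist r w
decreasing_by
  have := hanc.dist_root_lt h.1.connected hwc.ne
  have := hcs.dist_root_le
  omega

end IsValidTreePartition

theorem edge_endpoints_ancestor_related_general {V ι : Type*}
    (G : SimpleGraph V) (T : SimpleGraph ι) (r : ι) (β : ι → Set V)
    (h : IsValidTreePartition G T r β) {u v : V} (huv : G.Adj u v)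
    {s t : ι} (hu : u ∈ β s) (hv : v ∈ β t) :
    Ancestor T r s t ∨ Ancestor T r t s :=
  h.ancestor_or_ancestor_of_common_ancestor huv hu hv (.root T r s) (.root T r t)

/-- If `G` has a valid tree partition `(T, β)` rooted at `r`, and `{u, v}` is an edge of
`G` with `u ∈ β s` and `v ∈ β t`, then in `T` either `s` is an ancestor of `t`, or `t` is
an ancestor of `s`. -/
theorem edge_endpoints_ancestor_related {V ι : Type*} [Fintype V] [Fintype ι]
    (G : SimpleGraph V) (T : SimpleGraph ι) (r : ι) (β : ι → Set V)
    (h : IsValidTreePartition G T r β) {u v : V} (huv : G.Adj u v)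
    {s t : ι} (hu : u ∈ β s) (hv : v ∈ β t) :
    Ancestor T r s t ∨ Ancestor T r t s :=
  edge_endpoints_ancestor_related_general G T r β h huv hu hv
end

section
/- Let G be a finite simple graph with a valid tree partition (T, β), and let v_1, …, v_5 be vertices of G inducing a path P_5 (i.e., v_i and v_j are adjacent if and only if |i−j| = 1), with v_i ∈ β(s_i) for nodes s_1, …, s_5 of T. Then there exists an index i_0 ∈ {1, …, 5} such that s_{i_0} is an ancestor in T of s_i for every i ∈ {1, …, 5}. -/
open SimpleGraph

section TreeLemmas

variable {ι : Type*} {T : SimpleGraph ι}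

lemma tree_length_eq_dist (hT : T.IsTree) {a b : ι} {p : T.Walk a b} (hp : p.IsPath) :
    p.length = T.dist a b := by
  obtain ⟨q, hq, hlen⟩ := hT.isConnected.exists_path_of_dist a b
  have : (⟨p, hp⟩ : T.Path a b) = ⟨q, hq⟩ := hT.IsAcyclic.path_unique _ _
  have hpq : p = q := congrArg Subtype.val this
  rw [hpq]; exact hlen

lemma ancestor_iff_mem_support (hT : T.IsTree) {r b : ι} {p : T.Walk r b} (hp : p.IsPath)
    (a : ι) : Ancestor T r a b ↔ a ∈ p.support := by
  classical
  constructor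
  · intro hanc
    obtain ⟨q, hq, hlq⟩ := hT.isConnected.exists_path_of_dist r a
    obtain ⟨s, hs, hls⟩ := hT.isConnected.exists_path_of_dist a b
    have hlen : (q.append s).length = T.dist r b := by
      rw [SimpleGraph.Walk.length_append, hlq, hls]; exact hanc
    have hqs : (q.append s).IsPath := (q.append s).isPath_of_length_eq_dist hlen
    have : (⟨q.append s, hqs⟩ : T.Path r b) = ⟨p, hp⟩ := hT.IsAcyclic.path_unique _ _
    have heq : q.append s = p := congrArg Subtype.val this
    rw [← heq, SimpleGraph.Walk.mem_support_append_iff]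
    exact Or.inl q.end_mem_support
  · intro ha
    have hq := hp.takeUntil ha
    have hs := hp.dropUntil ha
    have h1 : (p.takeUntil a ha).length = T.dist r a := tree_length_eq_dist hT hq
    have h2 : (p.dropUntil a ha).length = T.dist a b := tree_length_eq_dist hT hs
    have h3 : p.length = T.dist r b := tree_length_eq_dist hT hp
    unfold Ancestor
    rw [← h1, ← h2, ← h3, ← SimpleGraph.Walk.length_append, p.take_spec ha]

lemma ancestor_total (hT : T.IsTree) {r a b c : ι} (ha : Ancestor T r a c)
    (hb : Ancestor T r b c) : Ancestor T r a b ∨ Ancestor T r b a := by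
  classical
  obtain ⟨p, hp, _⟩ := hT.isConnected.exists_path_of_dist r c
  have hma : a ∈ p.support := (ancestor_iff_mem_support hT hp a).1 ha
  have hmb : b ∈ p.support := (ancestor_iff_mem_support hT hp b).1 hb
  have hsplit := p.take_spec hmb
  have : a ∈ (p.takeUntil b hmb).support ∨ a ∈ (p.dropUntil b hmb).support := by
    rw [← SimpleGraph.Walk.mem_support_append_iff, hsplit]; exact hma
  rcases this with h | h
  · exact Or.inl ((ancestor_iff_mem_support hT (hp.takeUntil hmb) a).2 h)
  · right
    set s := p.dropUntil b hmb with hsdef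
    have hs : s.IsPath := hp.dropUntil hmb
    have hsplit2 := s.take_spec h
    -- (takeUntil b) ++ (s.takeUntil a) is a path from r to a containing b
    have hbig : ((p.takeUntil b hmb).append ((s.takeUntil a h).append (s.dropUntil a h))).IsPath := by
      rw [hsplit2, hsplit]; exact hp
    have hleft : ((p.takeUntil b hmb).append (s.takeUntil a h)).IsPath := by
      have := hbig
      rw [SimpleGraph.Walk.append_assoc] at this
      exact this.of_append_left
    refine (ancestor_iff_mem_support hT hleft b).2 ?_
    rw [SimpleGraph.Walk.mem_support_append_iff]
    exact Or.inl (p.takeUntil b hmb).end_mem_support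

lemma ancestor_refl (T : SimpleGraph ι) (r a : ι) : Ancestor T r a a := by
  simp [Ancestor, SimpleGraph.dist_self]

lemma ancestor_root (T : SimpleGraph ι) (r a : ι) : Ancestor T r r a := by
  simp [Ancestor, SimpleGraph.dist_self]

lemma ancestor_antisymm (hT : T.IsTree) {r a b : ι} (hab : Ancestor T r a b)
    (hba : Ancestor T r b a) : a = b := by
  unfold Ancestor at hab hba
  have h0 : T.dist a b = 0 := by omega
  exact (hT.isConnected.dist_eq_zero_iff).1 h0

end TreeLemmas

lemma dist_child {ι : Type*} {T : SimpleGraph ι} (hT : T.IsTree) {r m t : ι}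
    (hadj : T.Adj m t) (hanc : Ancestor T r m t) : T.dist r t = T.dist r m + 1 := by
  have h1 : T.dist m t = 1 := SimpleGraph.dist_eq_one_iff_adj.2 hadj
  unfold Ancestor at hanc; omega

lemma child_unique {ι : Type*} {T : SimpleGraph ι} (hT : T.IsTree) {r m t t' x : ι}
    (h1 : T.Adj m t) (h2 : Ancestor T r m t) (h3 : Ancestor T r t x)
    (h1' : T.Adj m t') (h2' : Ancestor T r m t') (h3' : Ancestor T r t' x) : t = t' := by
  have hd : T.dist r t = T.dist r t' := by
    rw [dist_child hT h1 h2, dist_child hT h1' h2']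
  rcases ancestor_total hT h3 h3' with h | h
  · unfold Ancestor at h
    have h0 : T.dist t t' = 0 := by omega
    exact hT.isConnected.dist_eq_zero_iff.1 h0
  · unfold Ancestor at h
    have h0 : T.dist t' t = 0 := by omega
    exact (hT.isConnected.dist_eq_zero_iff.1 h0).symm

/-- If `G` has a valid tree partition `(T, β)` rooted at `r`, and `v 0, …, v 4` are
vertices of `G` inducing a path `P₅` (that is, `v i` and `v j` are adjacent if and only
if `|i - j| = 1`), with `v i ∈ β (σ i)`, then there is an index `i₀` such that `σ i₀` is
an ancestor in `T` of `σ i` for every `i`. -/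
theorem induced_p5_has_common_ancestor_bag {V ι : Type*} [Fintype V] [Fintype ι]
    (G : SimpleGraph V) (T : SimpleGraph ι) (r : ι) (β : ι → Set V)
    (h : IsValidTreePartition G T r β) (v : Fin 5 → V) (σ : Fin 5 → ι)
    (hmem : ∀ i, v i ∈ β (σ i))
    (hpath : ∀ i j : Fin 5, G.Adj (v i) (v j) ↔ ((i : ℕ) + 1 = j ∨ (j : ℕ) + 1 = i)) :
    ∃ i₀ : Fin 5, ∀ i : Fin 5, Ancestor T r (σ i₀) (σ i) := by
  classical
  obtain ⟨hT, -, huniq, -, -, hcomp⟩ := h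
  by_contra hcon
  push_neg at hcon
  set C : Finset ι := Finset.univ.filter (fun m => ∀ i, Ancestor T r m (σ i)) with hC
  have hrC : r ∈ C := Finset.mem_filter.2 ⟨Finset.mem_univ r, fun i => ancestor_root T r (σ i)⟩
  obtain ⟨m, hmC, hmax⟩ := C.exists_max_image (fun m => T.dist r m) ⟨r, hrC⟩
  have hanc : ∀ i, Ancestor T r m (σ i) := (Finset.mem_filter.1 hmC).2
  have hmne : ∀ i, m ≠ σ i := by
    intro i heq
    obtain ⟨j, hj⟩ := hcon i
    exact hj (heq ▸ hanc j)
  have hbag : ∀ j, v j ∈ Bag T r β m \ β m := by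
    intro j
    refine ⟨?_, ?_⟩
    · simp only [Bag, Set.mem_iUnion, Set.mem_setOf_eq]
      exact ⟨σ j, hanc j, hmem j⟩
    · intro hmemm
      exact hmne j ((huniq (v j)).unique hmemm (hmem j))
  let w : Fin 5 → ↥(Bag T r β m \ β m) := fun j => ⟨v j, hbag j⟩
  have hadjW : ∀ (a b : Fin 5), ((a : ℕ) + 1 = b) →
      (G.induce (Bag T r β m \ β m)).Adj (w a) (w b) := by
    intro a b hab
    have : G.Adj (v a) (v b) := (hpath a b).2 (Or.inl hab)
    exact this
  have hreach : ∀ i, (G.induce (Bag T r β m \ β m)).Reachable (w 0) (w i) := by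
    have h01 := (hadjW 0 1 rfl).reachable
    have h12 := (hadjW 1 2 rfl).reachable
    have h23 := (hadjW 2 3 rfl).reachable
    have h34 := (hadjW 3 4 rfl).reachable
    intro i
    fin_cases i
    · exact SimpleGraph.Reachable.refl _
    · exact h01
    · exact h01.trans h12
    · exact h01.trans (h12.trans h23)
    · exact h01.trans (h12.trans (h23.trans h34))
  have key : ∀ i, ∃ t, T.Adj m t ∧ Ancestor T r m t ∧ Ancestor T r t (σ 0) ∧
      Ancestor T r t (σ i) := by
    intro i
    obtain ⟨t, hadj, hanc', hu, hv'⟩ := (hcomp m (w 0) (w i)).1 (hreach i)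
    have hσ : ∀ j, (v j : V) ∈ Bag T r β t → Ancestor T r t (σ j) := by
      intro j hj
      simp only [Bag, Set.mem_iUnion, Set.mem_setOf_eq] at hj
      obtain ⟨s', hs', hvs'⟩ := hj
      rw [(huniq (v j)).unique (hmem j) hvs']
      exact hs'
    exact ⟨t, hadj, hanc', hσ 0 hu, hσ i hv'⟩
  obtain ⟨t0, ha0, hb0, hc0, hd0⟩ := key 0
  have hall : ∀ i, Ancestor T r t0 (σ i) := by
    intro i
    obtain ⟨t, ha, hb, hc, hd⟩ := key i
    have heq : t = t0 := child_unique hT ha hb hc ha0 hb0 hc0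
    rwa [← heq]
  have ht0C : t0 ∈ C := Finset.mem_filter.2 ⟨Finset.mem_univ t0, hall⟩
  have hle := hmax t0 ht0C
  have hdt : T.dist r t0 = T.dist r m + 1 := dist_child hT ha0 hb0
  omega
end
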